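/- arXiv:1411.4584 — 6 statements merged into one kernel-verified Lean document; each statement's English description precedes it below -/
import Mathlib

section
/- Let Z_1 and Z_2 be discrete real-valued random variables each supported on at most B points. Then the total variation distance between Z_1 and Z_2 is at most sqrt(2B) times the supremum over all real α of |E[exp(2πi α Z_1)] − E[exp(2πi α Z_2)]|. -/
/-!
Let `Δ` be the difference of the laws of `Z₁` and `Z₂`, a signed measure on a set `s` of at most
`2B` points. The total variation is at most `∑ |Δ x| ≤ √#s · ‖Δ‖₂` by Cauchy–Schwarz, so it suffices
to show `‖Δ‖₂ ≤ M` when the Fourier transform `F α = ∑ Δ x e(α x)` is bounded by `M`. For `t` small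
the points `z x = e(t x)` are distinct on the unit circle and `F (m t) = ∑ Δ x (z x) ^ m`. Averaging
`|F (m t)|²` over `m < N` recovers `∑ |Δ x|²` up to off-diagonal geometric sums `∑ (z x z̄ y) ^ m`,
which are bounded independently of `N`; letting `N → ∞` gives `‖Δ‖₂² ≤ M²`.
-/

open Finset ComplexConjugate Real

lemma le_of_forall_nat_mul_le_add {a b C : ℝ} (h : ∀ N : ℕ, N * a ≤ N * b + C) : a ≤ b := by
  by_contra! hba
  obtain ⟨N, hN⟩ := exists_nat_gt (C / (a - b))
  rw [div_lt_iff₀ (sub_pos.2 hba)] at hN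
  linarith [h N]

lemma norm_geom_sum_le_of_norm_eq_one {w : ℂ} (hw : ‖w‖ = 1) (hw1 : w ≠ 1) (N : ℕ) :
    ‖∑ m ∈ range N, w ^ m‖ ≤ 2 / ‖w - 1‖ := by
  rw [geom_sum_eq hw1, norm_div]
  gcongr
  calc ‖w ^ N - 1‖ ≤ ‖w ^ N‖ + ‖(1 : ℂ)‖ := norm_sub_le _ _
    _ = 2 := by rw [norm_pow, hw]; norm_num

section PowerSums

variable {ι : Type*} (s : Finset ι) (c z : ι → ℂ)

lemma sum_range_norm_sum_mul_pow_sq (N : ℕ) :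
    ((∑ m ∈ range N, ‖∑ i ∈ s, c i * z i ^ m‖ ^ 2 : ℝ) : ℂ) =
      ∑ i ∈ s, ∑ j ∈ s, c i * conj (c j) * ∑ m ∈ range N, (z i * conj (z j)) ^ m := by
  push_cast
  simp_rw [← Complex.mul_conj', map_sum, sum_mul_sum, mul_sum]
  rw [sum_comm]
  refine sum_congr rfl fun i _ => ?_
  rw [sum_comm]
  refine sum_congr rfl fun j _ => sum_congr rfl fun m _ => ?_
  simp only [map_mul, map_pow]
  ring

lemma abs_sum_range_norm_sum_mul_pow_sq_sub_le [DecidableEq ι] (hz : ∀ i ∈ s, ‖z i‖ = 1)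
    (hinj : Set.InjOn z s) (N : ℕ) :
    |∑ m ∈ range N, ‖∑ i ∈ s, c i * z i ^ m‖ ^ 2 - N * ∑ i ∈ s, ‖c i‖ ^ 2| ≤
      ∑ i ∈ s, ∑ j ∈ s.erase i, ‖c i‖ * ‖c j‖ * (2 / ‖z i * conj (z j) - 1‖) := by
  have hdiag : ∀ i ∈ s, c i * conj (c i) * ∑ m ∈ range N, (z i * conj (z i)) ^ m =
      ((N * ‖c i‖ ^ 2 : ℝ) : ℂ) := by
    intro i hi
    simp [Complex.mul_conj', hz i hi, mul_comm]
  have hoffdiag : ((∑ m ∈ range N, ‖∑ i ∈ s, c i * z i ^ m‖ ^ 2 - N * ∑ i ∈ s, ‖c i‖ ^ 2 : ℝ) : ℂ) =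
      ∑ i ∈ s, ∑ j ∈ s.erase i, c i * conj (c j) * ∑ m ∈ range N, (z i * conj (z j)) ^ m := by
    rw [Complex.ofReal_sub, sum_range_norm_sum_mul_pow_sq, mul_sum, Complex.ofReal_sum,
      sub_eq_iff_eq_add', ← sum_add_distrib]
    exact sum_congr rfl fun i hi => by rw [← add_sum_erase s _ hi, hdiag i hi]
  rw [← Real.norm_eq_abs, ← Complex.norm_real, hoffdiag]
  refine (norm_sum_le _ _).trans (sum_le_sum fun i hi => (norm_sum_le _ _).trans
    (sum_le_sum fun j hj => ?_))
  obtain ⟨hji, hj⟩ := mem_erase.1 hj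
  have hw : ‖z i * conj (z j)‖ = 1 := by simp [hz i hi, hz j hj]
  have hw1 : z i * conj (z j) ≠ 1 := fun h => hji <| hinj hj hi <| by
    calc z j = z i * conj (z j) * z j := by rw [h, one_mul]
      _ = z i := by rw [mul_assoc, mul_comm (conj _), Complex.mul_conj', hz j hj]; simp
  rw [norm_mul, norm_mul, Complex.norm_conj]
  gcongr
  exact norm_geom_sum_le_of_norm_eq_one hw hw1 N

lemma sum_norm_sq_le_of_forall_norm_sum_mul_pow_le (hz : ∀ i ∈ s, ‖z i‖ = 1)
    (hinj : Set.InjOn z s) {M : ℝ} (hM : ∀ m : ℕ, ‖∑ i ∈ s, c i * z i ^ m‖ ≤ M) :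
    ∑ i ∈ s, ‖c i‖ ^ 2 ≤ M ^ 2 := by
  classical
  have hmean (N : ℕ) : ∑ m ∈ range N, ‖∑ i ∈ s, c i * z i ^ m‖ ^ 2 ≤ N * M ^ 2 := by
    calc _ ≤ ∑ m ∈ range N, M ^ 2 := sum_le_sum fun m _ => by gcongr; exact hM m
      _ = N * M ^ 2 := by simp
  exact le_of_forall_nat_mul_le_add fun N =>
    (neg_le_sub_iff_le_add.1
      (abs_le.1 (abs_sum_range_norm_sum_mul_pow_sq_sub_le s c z hz hinj N)).1).trans
      (add_le_add_left (hmean N) _)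

end PowerSums

theorem sum_norm_sq_le_of_forall_norm_fourier_le (s : Finset ℝ) (c : ℝ → ℂ) {M : ℝ}
    (hM : ∀ α : ℝ, ‖∑ x ∈ s, c x * Complex.exp (2 * π * Complex.I * (α * x : ℝ))‖ ≤ M) :
    ∑ x ∈ s, ‖c x‖ ^ 2 ≤ M ^ 2 := by
  set t := 1 / (2 * (∑ x ∈ s, |x| + 1))
  have ht : ∀ x ∈ s, |t * x| < 1 / 2 := by
    intro x hx
    have hx : |x| ≤ ∑ y ∈ s, |y| := single_le_sum (fun y _ => abs_nonneg y) hx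
    rw [abs_mul, abs_of_pos (by positivity), div_mul_eq_mul_div, div_lt_iff₀ (by positivity)]
    linarith
  have him : ∀ x ∈ s, -π < (2 * π * Complex.I * (t * x : ℝ)).im ∧
      (2 * π * Complex.I * (t * x : ℝ)).im ≤ π := by
    intro x hx
    have := abs_lt.1 (ht x hx)
    norm_num
    constructor <;> nlinarith [pi_pos]
  set z : ℝ → ℂ := fun x => Complex.exp (2 * π * Complex.I * (t * x : ℝ))
  refine sum_norm_sq_le_of_forall_norm_sum_mul_pow_le s c z (fun x _ => ?_) ?_ fun m => ?_
  · simp [z, Complex.norm_exp]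
  · intro x hx y hy hxy
    have h := Complex.exp_inj_of_neg_pi_lt_of_le_pi (him x hx).1 (him x hx).2 (him y hy).1
      (him y hy).2 hxy
    have hne : (2 * π * Complex.I : ℂ) ≠ 0 := by simp [pi_ne_zero]
    have htxy : t * x = t * y := by exact_mod_cast mul_left_cancel₀ hne h
    exact mul_left_cancel₀ (by positivity) htxy
  · convert hM (m * t) using 3 with x
    rw [← Complex.exp_nat_mul]
    push_cast
    ring_nf

def fiberSum {Ω β R : Type*} [Fintype Ω] [DecidableEq β] [AddCommMonoid R] (p : Ω → R)
    (Z : Ω → β) (x : β) : R :=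
  ∑ ω with Z ω = x, p ω

lemma sum_mul_comp_eq_sum_fiberSum_mul {Ω β R : Type*} [Fintype Ω] [DecidableEq β]
    [CommSemiring R] (p : Ω → R) (Z : Ω → β) (F : β → R) {s : Finset β} (hs : ∀ ω, Z ω ∈ s) :
    ∑ ω, p ω * F (Z ω) = ∑ x ∈ s, fiberSum p Z x * F x := by
  rw [← sum_fiberwise_of_maps_to (fun ω _ => hs ω)]
  refine sum_congr rfl fun x _ => ?_
  rw [fiberSum, sum_mul]
  exact sum_congr rfl fun ω hω => by rw [(mem_filter.1 hω).2]

theorem stmt0_general (B : ℕ) (Ω₁ Ω₂ : Type) [Fintype Ω₁] [Fintype Ω₂]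
    (p₁ : Ω₁ → ℝ) (p₂ : Ω₂ → ℝ)
    (Z₁ : Ω₁ → ℝ) (Z₂ : Ω₂ → ℝ)
    (hB₁ : (Finset.univ.image Z₁).card ≤ B)
    (hB₂ : (Finset.univ.image Z₂).card ≤ B)
    (M : ℝ)
    (hM : ∀ α : ℝ,
      ‖(∑ ω, (p₁ ω : ℂ) * Complex.exp (2 * Real.pi * Complex.I * (α * Z₁ ω : ℝ)))
        - ∑ ω, (p₂ ω : ℂ) * Complex.exp (2 * Real.pi * Complex.I * (α * Z₂ ω : ℝ))‖ ≤ M) :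
    ∀ A : Set ℝ,
      |(∑ ω, p₁ ω * A.indicator (fun _ => (1:ℝ)) (Z₁ ω))
        - ∑ ω, p₂ ω * A.indicator (fun _ => (1:ℝ)) (Z₂ ω)| ≤ Real.sqrt (2 * B) * M := by
  classical
  intro A
  set s := univ.image Z₁ ∪ univ.image Z₂
  have h₁ (ω : Ω₁) : Z₁ ω ∈ s := mem_union_left _ (mem_image_of_mem _ (mem_univ ω))
  have h₂ (ω : Ω₂) : Z₂ ω ∈ s := mem_union_right _ (mem_image_of_mem _ (mem_univ ω))
  set Δ : ℝ → ℝ := fun x => fiberSum p₁ Z₁ x - fiberSum p₂ Z₂ x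
  have hl2 : ∑ x ∈ s, Δ x ^ 2 ≤ M ^ 2 := by
    have := sum_norm_sq_le_of_forall_norm_fourier_le s (fun x => (Δ x : ℂ)) (M := M) fun α => ?_
    · simpa using this
    set e : ℝ → ℂ := fun x => Complex.exp (2 * π * Complex.I * (α * x : ℝ))
    convert hM α using 2
    rw [sum_mul_comp_eq_sum_fiberSum_mul _ Z₁ e h₁, sum_mul_comp_eq_sum_fiberSum_mul _ Z₂ e h₂,
      ← sum_sub_distrib]
    exact sum_congr rfl fun x _ => by simp [Δ, e, fiberSum, sub_mul]
  have hcard : (#s : ℝ) ≤ 2 * B := by exact_mod_cast (card_union_le _ _).trans (by omega)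
  have hM0 : 0 ≤ M := (norm_nonneg _).trans (hM 0)
  rw [sum_mul_comp_eq_sum_fiberSum_mul p₁ Z₁ _ h₁, sum_mul_comp_eq_sum_fiberSum_mul p₂ Z₂ _ h₂,
    ← sum_sub_distrib]
  calc _ ≤ ∑ x ∈ s, |Δ x| := by
        refine (abs_sum_le_sum_abs _ _).trans (sum_le_sum fun x _ => ?_)
        rw [← sub_mul, abs_mul]
        exact mul_le_of_le_one_right (abs_nonneg _) (by by_cases hx : x ∈ A <;> simp [hx])
    _ ≤ √(#s * ∑ x ∈ s, Δ x ^ 2) :=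
        le_sqrt_of_sq_le (by simpa using sq_sum_le_card_mul_sum_sq (s := s) (f := fun x => |Δ x|))
    _ ≤ √(2 * B * M ^ 2) := by gcongr
    _ = √(2 * B) * M := by rw [sqrt_mul (by positivity), sqrt_sq hM0]

theorem stmt0 (B : ℕ) (Ω₁ Ω₂ : Type) [Fintype Ω₁] [Fintype Ω₂]
    (p₁ : Ω₁ → ℝ) (p₂ : Ω₂ → ℝ)
    (hp₁ : ∀ ω, 0 ≤ p₁ ω) (hp₂ : ∀ ω, 0 ≤ p₂ ω)
    (hs₁ : ∑ ω, p₁ ω = 1) (hs₂ : ∑ ω, p₂ ω = 1)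
    (Z₁ : Ω₁ → ℝ) (Z₂ : Ω₂ → ℝ)
    (hB₁ : (Finset.univ.image Z₁).card ≤ B)
    (hB₂ : (Finset.univ.image Z₂).card ≤ B)
    (M : ℝ)
    (hM : ∀ α : ℝ,
      ‖(∑ ω, (p₁ ω : ℂ) * Complex.exp (2 * Real.pi * Complex.I * (α * Z₁ ω : ℝ)))
        - ∑ ω, (p₂ ω : ℂ) * Complex.exp (2 * Real.pi * Complex.I * (α * Z₂ ω : ℝ))‖ ≤ M) :
    ∀ A : Set ℝ,
      |(∑ ω, p₁ ω * A.indicator (fun _ => (1:ℝ)) (Z₁ ω))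
        - ∑ ω, p₂ ω * A.indicator (fun _ => (1:ℝ)) (Z₂ ω)| ≤ Real.sqrt (2 * B) * M :=
  stmt0_general B Ω₁ Ω₂ p₁ p₂ Z₁ Z₂ hB₁ hB₂ M hM
end

section
/- Let Q be a multilinear polynomial of degree d over {−1,1}^n and let x be drawn from a δ-biased distribution over {−1,1}^n. Then for every even integer p ≥ 2, E[Q(x)^p] ≤ (p−1)^{pd/2} · ‖Q‖_2^p + ‖Q‖_1^p · δ, where ‖Q‖_2 is the square root of the sum of squares of the coefficients of Q and ‖Q‖_1 is the sum of absolute values of the coefficients. -/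
open Finset

/-- The map sending a boolean to the corresponding sign `±1`. -/
noncomputable def pm (b : Bool) : ℝ := if b then 1 else -1

/-!
Expanding `Q(x)^p` over `p`-tuples of monomials writes it as a combination of characters
`χ_{S₁ ∆ ⋯ ∆ S_p}` whose coefficients have total absolute value `‖Q‖₁^p`. A δ-biased
distribution and the uniform one give the same mean to the empty character and means differing
by at most `δ` to every other character, so `E_μ[Q^p] ≤ E[Q^p] + ‖Q‖₁^p δ`.

The uniform moment is handled by the Bonami–Beckner bound in the form
`E[Q^{2q}] ≤ (∑_S (2q-1)^{|S|} c_S²)^q`, proved by induction on the dimension: writing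
`Q = x₀ S + R`, averaging over `x₀` leaves `∑_j C(2q,2j) E[S^{2j} R^{2q-2j}]`, Hölder's inequality
bounds each term by the inductive bounds for `S` and `R`, and `C(2q,2j) ≤ C(q,j) (2q-1)^j` turns
the sum back into a binomial expansion. Since `c_S = 0` for `|S| > d`, the weight is at most
`(2q-1)^d ‖Q‖₂²`.
-/

open scoped BigOperators symmDiff

section Characters

variable {ι : Type*}

noncomputable def chi (S : Finset ι) (x : ι → Bool) : ℝ := ∏ i ∈ S, pm (x i)

noncomputable def walsh [Fintype ι] (c : Finset ι → ℝ) (x : ι → Bool) : ℝ :=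
  ∑ S, c S * chi S x

lemma pm_mul_self (b : Bool) : pm b * pm b = 1 := by cases b <;> simp [pm]

lemma expect_pm_pow (k : ℕ) : 𝔼 b, pm b ^ k = if Even k then 1 else 0 := by
  rcases Nat.even_or_odd k with hk | hk
  · simp [Finset.expect_eq_sum_div_card, pm, hk.neg_one_pow, hk]
  · simp [Finset.expect_eq_sum_div_card, pm, hk.neg_one_pow, Nat.not_even_iff_odd.2 hk]

variable [DecidableEq ι]

lemma chi_mul_chi (S T : Finset ι) (x : ι → Bool) : chi S x * chi T x = chi (S ∆ T) x := by
  have hsq : (∏ i ∈ S ∩ T, pm (x i)) * ∏ i ∈ S ∩ T, pm (x i) = 1 := by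
    rw [← prod_mul_distrib]; exact prod_eq_one fun i _ => pm_mul_self _
  have hunion : S ∪ T = S ∆ T ∪ S ∩ T := (symmDiff_sup_inf S T).symm
  rw [chi, chi, chi, ← prod_union_inter, hunion,
    prod_union (s₂ := S ∩ T) (disjoint_symmDiff_inf S T), mul_assoc, hsq, mul_one]

lemma prod_chi {κ : Type*} (s : Finset κ) (t : κ → Finset ι) (x : ι → Bool) :
    ∏ k ∈ s, chi (t k) x = chi (s.fold (symmDiff : Finset ι → Finset ι → Finset ι) ∅ t) x := by
  classical
  induction s using Finset.induction_on with
  | empty => simp [chi]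
  | insert k s hk ih => rw [prod_insert hk, fold_insert hk, ih, chi_mul_chi]

lemma expect_chi [Fintype ι] (S : Finset ι) : 𝔼 x, chi S x = if S = ∅ then 1 else 0 := by
  obtain rfl | ⟨i, hi⟩ := S.eq_empty_or_nonempty
  · simp [chi]
  have hsum : ∑ x : ι → Bool, chi S x = 0 := by
    simp_rw [chi, ← Fintype.prod_ite_mem S]
    rw [← Fintype.prod_sum fun j b => if j ∈ S then pm b else 1]
    exact prod_eq_zero (mem_univ i) (by simp [hi, pm])
  rw [Finset.expect_eq_sum_div_card, hsum, zero_div, if_neg (ne_empty_of_mem hi)]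

lemma walsh_pow [Fintype ι] (c : Finset ι → ℝ) (p : ℕ) (x : ι → Bool) :
    walsh c x ^ p = ∑ t : Fin p → Finset ι,
      (∏ k, c (t k)) * chi (univ.fold (symmDiff : Finset ι → Finset ι → Finset ι) ∅ t) x := by
  simp_rw [walsh, Fintype.sum_pow, prod_mul_distrib, prod_chi]

end Characters

section Bias

variable {ι : Type*} [Fintype ι] [DecidableEq ι]

def IsDeltaBiased (μ : (ι → Bool) → ℝ) (δ : ℝ) : Prop :=
  ∀ S : Finset ι, S.Nonempty → |∑ x, μ x * chi S x| ≤ δ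

variable {μ : (ι → Bool) → ℝ} {δ : ℝ}

lemma IsDeltaBiased.sum_mul_sum_chi_le (hμ : IsDeltaBiased μ δ) (hμ1 : ∑ x, μ x = 1) (hδ : 0 ≤ δ)
    {κ : Type*} (s : Finset κ) (w : κ → ℝ) (t : κ → Finset ι) :
    ∑ x, μ x * ∑ k ∈ s, w k * chi (t k) x ≤
      𝔼 x, ∑ k ∈ s, w k * chi (t k) x + δ * ∑ k ∈ s, |w k| := by
  have hterm : ∀ k, w k * ∑ x, μ x * chi (t k) x ≤ w k * 𝔼 x, chi (t k) x + δ * |w k| := by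
    intro k
    rw [expect_chi]
    obtain h | h := (t k).eq_empty_or_nonempty
    · simp [h, chi, hμ1, mul_nonneg hδ (abs_nonneg (w k))]
    · rw [if_neg h.ne_empty, mul_zero, zero_add, mul_comm δ]
      calc w k * ∑ x, μ x * chi (t k) x ≤ |w k| * |∑ x, μ x * chi (t k) x| :=
            (le_abs_self _).trans (abs_mul _ _).le
        _ ≤ |w k| * δ := mul_le_mul_of_nonneg_left (hμ _ h) (abs_nonneg _)
  simp_rw [mul_sum, expect_sum_comm, ← mul_expect]
  rw [sum_comm, ← sum_add_distrib]
  refine sum_le_sum fun k _ => ?_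
  simpa only [mul_sum, mul_left_comm (μ _)] using hterm k

lemma IsDeltaBiased.sum_mul_walsh_pow_le (hμ : IsDeltaBiased μ δ) (hμ1 : ∑ x, μ x = 1)
    (hδ : 0 ≤ δ) (c : Finset ι → ℝ) (p : ℕ) :
    ∑ x, μ x * walsh c x ^ p ≤ 𝔼 x, walsh c x ^ p + δ * (∑ S, |c S|) ^ p := by
  have hl1 : ∑ t : Fin p → Finset ι, |∏ k, c (t k)| = (∑ S, |c S|) ^ p := by
    simp_rw [Fintype.sum_pow, abs_prod]
  simp_rw [walsh_pow, ← hl1]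
  exact hμ.sum_mul_sum_chi_le hμ1 hδ _ _ _

end Bias

lemma sum_range_two_mul_add_one {M : Type*} [AddCommMonoid M] (f : ℕ → M) (m : ℕ) :
    ∑ k ∈ range (2 * m + 1), f k =
      ∑ j ∈ range (m + 1), f (2 * j) + ∑ j ∈ range m, f (2 * j + 1) := by
  induction m with
  | zero => simp
  | succ m ih =>
    rw [show 2 * (m + 1) + 1 = 2 * m + 1 + 1 + 1 by ring, sum_range_succ, sum_range_succ, ih]
    simp only [sum_range_succ, mul_add, mul_one]
    abel

lemma expect_pm_mul_add_pow (s r : ℝ) (q : ℕ) :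
    𝔼 b, (pm b * s + r) ^ (2 * q) =
      ∑ j ∈ range (q + 1), ((2 * q).choose (2 * j) : ℝ) * (s ^ 2) ^ j * (r ^ 2) ^ (q - j) := by
  simp_rw [add_pow, mul_pow, expect_sum_comm, ← expect_mul, expect_pm_pow,
    sum_range_two_mul_add_one]
  simp only [even_two_mul, Nat.not_even_bit1, if_true, if_false, zero_mul, sum_const_zero,
    add_zero, one_mul]
  refine sum_congr rfl fun j hj => ?_
  rw [← pow_mul, ← pow_mul, show 2 * q - 2 * j = 2 * (q - j) by omega]
  ring

lemma Nat.choose_two_mul_two_mul_le (q j : ℕ) :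
    (2 * q).choose (2 * j) ≤ q.choose j * (2 * q - 1) ^ j := by
  induction j with
  | zero => simp
  | succ j ih =>
    rcases le_or_gt q j with h | h
    · rw [Nat.choose_eq_zero_of_lt (by omega)]
      exact Nat.zero_le _
    -- From `2j` to `2j + 2` the left side gains the factor `(2q-2j)(2q-2j-1) / ((2j+2)(2j+1))`,
    -- the right side `(q-j)(2q-1) / (j+1)`; write `q = j + 1 + a` to avoid truncated subtraction.
    · obtain ⟨a, rfl⟩ : ∃ a, q = j + 1 + a := ⟨q - j - 1, by omega⟩
      have e1 := Nat.choose_succ_right_eq (2 * (j + 1 + a)) (2 * j + 1)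
      have e2 := Nat.choose_succ_right_eq (2 * (j + 1 + a)) (2 * j)
      have e3 := Nat.choose_succ_right_eq (j + 1 + a) j
      rw [show 2 * (j + 1 + a) - (2 * j + 1) = 2 * a + 1 by omega] at e1
      rw [show 2 * (j + 1 + a) - 2 * j = 2 * (a + 1) by omega] at e2
      rw [show j + 1 + a - j = a + 1 by omega] at e3
      rw [show 2 * (j + 1 + a) - 1 = 2 * j + 2 * a + 1 by omega] at ih ⊢
      refine Nat.le_of_mul_le_mul_right (c := (2 * j + 1 + 1) * (2 * j + 1)) ?_ (by positivity)
      calc (2 * (j + 1 + a)).choose (2 * (j + 1)) * ((2 * j + 1 + 1) * (2 * j + 1))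
          = 2 * (a + 1) * (2 * a + 1) * (2 * (j + 1 + a)).choose (2 * j) := by
            rw [show 2 * (j + 1) = 2 * j + 1 + 1 by ring, ← mul_assoc, e1, mul_right_comm, e2]
            ring
        _ ≤ 2 * (a + 1) * ((2 * j + 2 * a + 1) * (2 * j + 1)) *
              ((j + 1 + a).choose j * (2 * j + 2 * a + 1) ^ j) := by
            gcongr
            nlinarith
        _ = 2 * (2 * j + 2 * a + 1) ^ (j + 1) * (2 * j + 1) *
              ((j + 1 + a).choose j * (a + 1)) := by ring
        _ = 2 * (2 * j + 2 * a + 1) ^ (j + 1) * (2 * j + 1) *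
              ((j + 1 + a).choose (j + 1) * (j + 1)) := by rw [e3]
        _ = (j + 1 + a).choose (j + 1) * (2 * j + 2 * a + 1) ^ (j + 1) *
              ((2 * j + 1 + 1) * (2 * j + 1)) := by ring

lemma sum_choose_two_mul_mul_le {q : ℕ} (hq : 0 < q) {x y : ℝ} (hx : 0 ≤ x) (hy : 0 ≤ y) :
    ∑ j ∈ range (q + 1), ((2 * q).choose (2 * j) : ℝ) * x ^ j * y ^ (q - j) ≤
      ((2 * q - 1) * x + y) ^ q := by
  rw [add_pow]
  refine sum_le_sum fun j _ => ?_
  have hchoose : ((2 * q).choose (2 * j) : ℝ) ≤ q.choose j * (2 * q - 1) ^ j := by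
    have h := (Nat.cast_le (α := ℝ)).2 (Nat.choose_two_mul_two_mul_le q j)
    push_cast [Nat.cast_sub (show 1 ≤ 2 * q by omega)] at h
    exact h
  calc _ ≤ (q.choose j * (2 * q - 1) ^ j : ℝ) * x ^ j * y ^ (q - j) := by gcongr
    _ = _ := by rw [mul_pow]; ring

lemma sum_pow_mul_pow_le {α : Type*} (s : Finset α) {a b : α → ℝ} (ha : ∀ i ∈ s, 0 ≤ a i)
    (hb : ∀ i ∈ s, 0 ≤ b i) {j q : ℕ} (hjq : j ≤ q) :
    (∑ i ∈ s, a i ^ j * b i ^ (q - j)) ^ q ≤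
      (∑ i ∈ s, a i ^ q) ^ j * (∑ i ∈ s, b i ^ q) ^ (q - j) := by
  obtain rfl | hj0 := j.eq_zero_or_pos
  · simp
  obtain rfl | hjq := hjq.eq_or_lt
  · simp
  have hq0 : (q : ℝ) ≠ 0 := by exact_mod_cast (show q ≠ 0 by omega)
  have hconj : (q / j : ℝ).HolderConjugate (q / (q - j : ℕ)) := by
    have hj : (0 : ℝ) < j := by exact_mod_cast hj0
    refine Real.holderConjugate_iff.2 ⟨?_, ?_⟩
    · rw [lt_div_iff₀ hj, one_mul]; exact_mod_cast hjq
    · rw [inv_div, inv_div, ← add_div, Nat.cast_sub hjq.le, add_sub_cancel, div_self hq0]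
  have hpow : ∀ m : ℕ, 0 < m → ∀ z : ℝ, 0 ≤ z → (z ^ m) ^ ((q : ℝ) / m) = z ^ q := by
    intro m hm z hz
    rw [← Real.rpow_natCast, ← Real.rpow_mul hz, mul_div_cancel₀ _ (by positivity),
      Real.rpow_natCast]
  have hholder := Real.inner_le_Lp_mul_Lq_of_nonneg s hconj (f := fun i => a i ^ j)
    (g := fun i => b i ^ (q - j)) (fun i hi => pow_nonneg (ha i hi) _)
    (fun i hi => pow_nonneg (hb i hi) _)
  rw [sum_congr rfl fun i hi => hpow j hj0 _ (ha i hi),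
    sum_congr rfl fun i hi => hpow (q - j) (by omega) _ (hb i hi), one_div_div, one_div_div]
    at hholder
  calc _ ≤ ((∑ i ∈ s, a i ^ q) ^ ((j : ℝ) / q) *
          (∑ i ∈ s, b i ^ q) ^ (((q - j : ℕ) : ℝ) / q)) ^ q :=
        pow_le_pow_left₀ (sum_nonneg fun i hi => mul_nonneg (pow_nonneg (ha i hi) _)
          (pow_nonneg (hb i hi) _)) hholder q
    _ = _ := by
        rw [mul_pow, ← Real.rpow_mul_natCast, ← Real.rpow_mul_natCast,
          div_mul_cancel₀ _ hq0, div_mul_cancel₀ _ hq0, Real.rpow_natCast, Real.rpow_natCast]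
        · exact sum_nonneg fun i hi => pow_nonneg (hb i hi) _
        · exact sum_nonneg fun i hi => pow_nonneg (ha i hi) _

lemma expect_pow_mul_pow_le_of_le {α : Type*} [Fintype α] {a b : α → ℝ} (ha : ∀ i, 0 ≤ a i)
    (hb : ∀ i, 0 ≤ b i) {A B : ℝ} (hA : 0 ≤ A) (hB : 0 ≤ B) {q : ℕ} (hq : 0 < q)
    (haA : 𝔼 i, a i ^ q ≤ A ^ q) (hbB : 𝔼 i, b i ^ q ≤ B ^ q) {j : ℕ} (hjq : j ≤ q) :
    𝔼 i, a i ^ j * b i ^ (q - j) ≤ A ^ j * B ^ (q - j) := by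
  have hholder : (𝔼 i, a i ^ j * b i ^ (q - j)) ^ q ≤
      (𝔼 i, a i ^ q) ^ j * (𝔼 i, b i ^ q) ^ (q - j) := by
    simp only [expect_eq_sum_div_card, div_pow]
    rw [div_mul_div_comm, ← pow_add, Nat.add_sub_cancel' hjq]
    gcongr
    exact sum_pow_mul_pow_le _ (fun i _ => ha i) (fun i _ => hb i) hjq
  have hEa : 0 ≤ 𝔼 i, a i ^ q := expect_nonneg fun i _ => pow_nonneg (ha i) _
  have hEb : 0 ≤ 𝔼 i, b i ^ q := expect_nonneg fun i _ => pow_nonneg (hb i) _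
  rw [← pow_le_pow_iff_left₀ (expect_nonneg fun i _ => mul_nonneg (pow_nonneg (ha i) _)
    (pow_nonneg (hb i) _)) (by positivity) hq.ne']
  calc _ ≤ (𝔼 i, a i ^ q) ^ j * (𝔼 i, b i ^ q) ^ (q - j) := hholder
    _ ≤ (A ^ q) ^ j * (B ^ q) ^ (q - j) := by gcongr
    _ = (A ^ j * B ^ (q - j)) ^ q := by ring

lemma expect_fin_cons {n : ℕ} {α M : Type*} [Fintype α] [AddCommMonoid M] [Module ℚ≥0 M]
    (f : (Fin (n + 1) → α) → M) : 𝔼 x, f x = 𝔼 y, 𝔼 b, f (Fin.cons b y) := by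
  rw [← Fintype.expect_equiv (Fin.consEquiv fun _ => α) (fun p => f (Fin.cons p.1 p.2)) f
    fun _ => rfl, ← univ_product_univ, expect_product' univ univ fun b y => f (Fin.cons b y),
    expect_comm]

lemma sum_finset_fin_succ {n : ℕ} {M : Type*} [AddCommMonoid M]
    (f : Finset (Fin (n + 1)) → M) :
    ∑ U, f U = ∑ T : Finset (Fin n), (f (T.image Fin.succ) + f (insert 0 (T.image Fin.succ))) := by
  have h0 : (0 : Fin (n + 1)) ∉ univ.image Fin.succ := by simp
  have huniv : (univ : Finset (Fin (n + 1))) = insert 0 (univ.image Fin.succ) := by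
    ext i; cases i using Fin.cases <;> simp
  have hinj : Function.Injective fun T : Finset (Fin n) => T.image Fin.succ :=
    image_injective (Fin.succ_injective n)
  rw [← powerset_univ, huniv, sum_powerset_insert h0, powerset_image, sum_image hinj.injOn,
    sum_image hinj.injOn, powerset_univ, sum_add_distrib]

section FinSucc

variable {n : ℕ}

def coeffSucc (c : Finset (Fin (n + 1)) → ℝ) (T : Finset (Fin n)) : ℝ := c (T.image Fin.succ)

def coeffInsertZero (c : Finset (Fin (n + 1)) → ℝ) (T : Finset (Fin n)) : ℝ :=
  c (insert 0 (T.image Fin.succ))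

lemma walsh_cons (c : Finset (Fin (n + 1)) → ℝ) (b : Bool) (y : Fin n → Bool) :
    walsh c (Fin.cons b y) = pm b * walsh (coeffInsertZero c) y + walsh (coeffSucc c) y := by
  have hsucc : ∀ T : Finset (Fin n), chi (T.image Fin.succ) (Fin.cons b y) = chi T y := by
    intro T
    rw [chi, prod_image (Fin.succ_injective n).injOn]
    simp [chi]
  have hzero : ∀ T : Finset (Fin n),
      chi (insert 0 (T.image Fin.succ)) (Fin.cons b y) = pm b * chi T y := by
    intro T
    rw [chi, prod_insert (by simp [Fin.succ_ne_zero]), ← chi, hsucc, Fin.cons_zero]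
  simp only [walsh, sum_finset_fin_succ, hsucc, hzero, sum_add_distrib, mul_sum, coeffSucc,
    coeffInsertZero]
  rw [add_comm]
  congr 1
  exact sum_congr rfl fun T _ => by ring

lemma sum_pow_card_mul_sq_fin_succ (K : ℝ) (c : Finset (Fin (n + 1)) → ℝ) :
    ∑ U, K ^ #U * c U ^ 2 =
      K * ∑ T, K ^ #T * coeffInsertZero c T ^ 2 + ∑ T, K ^ #T * coeffSucc c T ^ 2 := by
  have hcard : ∀ T : Finset (Fin n), #(T.image Fin.succ) = #T :=
    fun T => card_image_of_injective T (Fin.succ_injective n)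
  have hcard0 : ∀ T : Finset (Fin n), #(insert 0 (T.image Fin.succ)) = #T + 1 := fun T => by
    rw [card_insert_of_notMem (by simp), hcard]
  simp only [sum_finset_fin_succ, hcard, hcard0, sum_add_distrib, mul_sum, coeffSucc,
    coeffInsertZero, pow_succ]
  rw [add_comm]
  congr 1
  exact sum_congr rfl fun T _ => by ring

end FinSucc

theorem expect_walsh_pow_le {q : ℕ} (hq : 0 < q) {n : ℕ} (c : Finset (Fin n) → ℝ) :
    𝔼 x, walsh c x ^ (2 * q) ≤ (∑ S, (2 * q - 1 : ℝ) ^ #S * c S ^ 2) ^ q := by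
  have hK : (0 : ℝ) ≤ 2 * q - 1 := by
    have : (1 : ℝ) ≤ q := by exact_mod_cast hq
    linarith
  induction n with
  | zero => simp [walsh, chi, pow_mul, Subsingleton.elim (default : Finset (Fin 0)) ∅]
  | succ n ih =>
    set S := walsh (coeffInsertZero c)
    set R := walsh (coeffSucc c)
    set WS := ∑ T, (2 * q - 1 : ℝ) ^ #T * coeffInsertZero c T ^ 2
    set WR := ∑ T, (2 * q - 1 : ℝ) ^ #T * coeffSucc c T ^ 2
    have hWS : 0 ≤ WS := sum_nonneg fun T _ => by positivity
    have hWR : 0 ≤ WR := sum_nonneg fun T _ => by positivity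
    have hmoment : ∀ j ≤ q, 𝔼 y, (S y ^ 2) ^ j * (R y ^ 2) ^ (q - j) ≤ WS ^ j * WR ^ (q - j) :=
      fun j hj => expect_pow_mul_pow_le_of_le (fun _ => sq_nonneg _) (fun _ => sq_nonneg _) hWS
        hWR hq (by simpa only [← pow_mul] using ih _) (by simpa only [← pow_mul] using ih _) hj
    calc 𝔼 x, walsh c x ^ (2 * q) = 𝔼 y, 𝔼 b, (pm b * S y + R y) ^ (2 * q) := by
          simp_rw [expect_fin_cons, walsh_cons]
          rfl
      _ = ∑ j ∈ range (q + 1),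
            ((2 * q).choose (2 * j) : ℝ) * 𝔼 y, (S y ^ 2) ^ j * (R y ^ 2) ^ (q - j) := by
          simp_rw [expect_pm_mul_add_pow, expect_sum_comm, mul_assoc, ← mul_expect]
      _ ≤ ∑ j ∈ range (q + 1), ((2 * q).choose (2 * j) : ℝ) * (WS ^ j * WR ^ (q - j)) :=
          sum_le_sum fun j hj => mul_le_mul_of_nonneg_left
            (hmoment j (Nat.lt_succ_iff.1 (mem_range.1 hj))) (Nat.cast_nonneg _)
      _ ≤ ((2 * q - 1) * WS + WR) ^ q := by
          simpa only [mul_assoc] using sum_choose_two_mul_mul_le hq hWS hWR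
      _ = _ := by rw [sum_pow_card_mul_sq_fin_succ]

lemma sum_pow_card_mul_sq_le {ι : Type*} [Fintype ι] {K : ℝ} (hK : 1 ≤ K) {d : ℕ}
    {c : Finset ι → ℝ} (hdeg : ∀ S : Finset ι, d < #S → c S = 0) :
    ∑ S, K ^ #S * c S ^ 2 ≤ K ^ d * ∑ S, c S ^ 2 := by
  rw [mul_sum]
  refine sum_le_sum fun S _ => ?_
  rcases le_or_gt #S d with h | h
  · gcongr
  · simp [hdeg S h]

theorem stmt1_general (n d : ℕ) (δ : ℝ) (hδ : 0 ≤ δ) (c : Finset (Fin n) → ℝ)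
    (hdeg : ∀ S : Finset (Fin n), d < S.card → c S = 0)
    (μ : (Fin n → Bool) → ℝ) (hμ1 : ∑ x, μ x = 1)
    (hbias : ∀ S : Finset (Fin n), S.Nonempty →
      |∑ x, μ x * ∏ i ∈ S, pm (x i)| ≤ δ)
    (p : ℕ) (hp : 2 ≤ p) (hpe : Even p) :
    ∑ x, μ x * (∑ S : Finset (Fin n), c S * ∏ i ∈ S, pm (x i)) ^ p ≤
      ((p : ℝ) - 1) ^ (p * d / 2) * Real.sqrt (∑ S, c S ^ 2) ^ p
      + (∑ S, |c S|) ^ p * δ := by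
  obtain ⟨q, rfl⟩ := hpe
  have hq : 0 < q := by omega
  have hK : (1 : ℝ) ≤ 2 * q - 1 := by
    have : (1 : ℝ) ≤ q := by exact_mod_cast hq
    linarith
  have hmoment : 𝔼 x, walsh c x ^ (2 * q) ≤ ((2 * q - 1 : ℝ) ^ d * ∑ S, c S ^ 2) ^ q :=
    (expect_walsh_pow_le hq c).trans
      (pow_le_pow_left₀ (sum_nonneg fun S _ => by positivity) (sum_pow_card_mul_sq_le hK hdeg) q)
  calc ∑ x, μ x * walsh c x ^ (q + q)
      ≤ 𝔼 x, walsh c x ^ (2 * q) + δ * (∑ S, |c S|) ^ (q + q) := by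
        rw [← two_mul]; exact IsDeltaBiased.sum_mul_walsh_pow_le hbias hμ1 hδ c _
    _ ≤ ((2 * q - 1 : ℝ) ^ d * ∑ S, c S ^ 2) ^ q + δ * (∑ S, |c S|) ^ (q + q) :=
        add_le_add_left hmoment _
    _ = _ := by
        rw [← two_mul, mul_assoc, Nat.mul_div_cancel_left _ two_pos, pow_mul (√_),
          Real.sq_sqrt (sum_nonneg fun S _ => sq_nonneg _), mul_pow, ← pow_mul, mul_comm d q]
        push_cast
        ring

theorem stmt1 (n d : ℕ) (δ : ℝ) (hδ : 0 ≤ δ) (c : Finset (Fin n) → ℝ)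
    (hdeg : ∀ S : Finset (Fin n), d < S.card → c S = 0)
    (μ : (Fin n → Bool) → ℝ) (hμ0 : ∀ x, 0 ≤ μ x) (hμ1 : ∑ x, μ x = 1)
    (hbias : ∀ S : Finset (Fin n), S.Nonempty →
      |∑ x, μ x * ∏ i ∈ S, pm (x i)| ≤ δ)
    (p : ℕ) (hp : 2 ≤ p) (hpe : Even p) :
    ∑ x, μ x * (∑ S : Finset (Fin n), c S * ∏ i ∈ S, pm (x i)) ^ p ≤
      ((p : ℝ) - 1) ^ (p * d / 2) * Real.sqrt (∑ S, c S ^ 2) ^ p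
      + (∑ S, |c S|) ^ p * δ :=
  stmt1_general n d δ hδ c hdeg μ hμ1 hbias p hp hpe
end

section
/- There exist universal constants such that for every unit vector v ∈ ℝ^n, every ε-biased distribution D over {−1,1}^n, and every t ≥ 1, Pr_{x∼D}[|⟨v,x⟩| > t] ≤ 2·exp(−t²/4) + ‖v‖_0^{t²} · ε, where ‖v‖_0 denotes the number of nonzero coordinates of v. -/
/-! Moment method with `m = ⌊t²/2⌋` and `Z = ⟨v, x⟩`: by Markov, the tail is at most
`E_μ[Z^{2m}] / t^{2m}`. Expanding `Z^{2m}` into monomials, every monomial is a character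
`χ_S`, on which `μ` and the uniform distribution differ by at most `ε`, and the coefficients
have total absolute value `‖v‖₁^{2m} ≤ ‖v‖₀^m`. Under the uniform distribution, Khintchine's
inequality with the sharp constant gives `E[Z^{2m}] ≤ (2m-1)!! ≤ m^m`, and
`m^m / t^{2m} ≤ 2^{-m} ≤ 2 e^{-t²/4}`. -/

open Finset

open scoped Nat

@[simp] lemma pm_true : pm true = 1 := rfl

@[simp] lemma pm_false : pm false = -1 := rfl

lemma pm_pow (b : Bool) (c : ℕ) : pm b ^ c = if Even c then 1 else pm b := by
  rcases Nat.even_or_odd c with hc | hc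
  · cases b <;> simp [hc, hc.neg_one_pow]
  · cases b <;> simp [Nat.not_even_iff_odd.mpr hc, hc.neg_one_pow]

section Characters

variable {ι : Type*} [Fintype ι] [DecidableEq ι]

lemma exists_prod_pm_comp_eq {κ : Type*} [Fintype κ] (f : κ → ι) :
    ∃ S : Finset ι, ∀ x : ι → Bool, ∏ j, pm (x (f j)) = ∏ i ∈ S, pm (x i) := by
  refine ⟨univ.filter fun i => ¬ Even #{j | f j = i}, fun x => ?_⟩
  rw [← prod_fiberwise' univ f fun i => pm (x i), prod_filter]
  refine prod_congr rfl fun i _ => ?_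
  rw [prod_const, pm_pow]
  split_ifs <;> rfl

lemma sum_prod_pm_eq_zero {S : Finset ι} (hS : S.Nonempty) :
    ∑ x : ι → Bool, ∏ i ∈ S, pm (x i) = 0 := by
  obtain ⟨i₀, hi₀⟩ := hS
  have h : ∀ x : ι → Bool, ∏ i ∈ S, pm (x i) = ∏ i, if i ∈ S then pm (x i) else 1 :=
    fun x => (Fintype.prod_ite_mem S _).symm
  rw [sum_congr rfl fun x _ => h x,
    ← Fintype.prod_sum fun i b => if i ∈ S then pm b else 1]
  exact prod_eq_zero (mem_univ i₀) (by simp [hi₀])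

lemma abs_sum_mul_pow_le (v : ι → ℝ) (w : (ι → Bool) → ℝ) {ε : ℝ}
    (hw : ∀ S : Finset ι, |∑ x, w x * ∏ i ∈ S, pm (x i)| ≤ ε) (k : ℕ) :
    |∑ x, w x * (∑ i, v i * pm (x i)) ^ k| ≤ ε * (∑ i, |v i|) ^ k := by
  have hexpand : ∑ x, w x * (∑ i, v i * pm (x i)) ^ k =
      ∑ f : Fin k → ι, (∏ j, v (f j)) * ∑ x, w x * ∏ j, pm (x (f j)) := by
    simp_rw [Fintype.sum_pow, mul_sum, prod_mul_distrib]
    rw [sum_comm]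
    exact sum_congr rfl fun f _ => sum_congr rfl fun x _ => by ring
  rw [hexpand, Fintype.sum_pow, mul_sum]
  refine (abs_sum_le_sum_abs _ _).trans (sum_le_sum fun f _ => ?_)
  obtain ⟨S, hS⟩ := exists_prod_pm_comp_eq f
  simp_rw [hS, abs_mul, abs_prod]
  rw [mul_comm ε]
  exact mul_le_mul_of_nonneg_left (hw S) (prod_nonneg fun _ _ => abs_nonneg _)

lemma abs_sum_sub_uniform_mul_prod_pm_le (μ : (ι → Bool) → ℝ) (hμ1 : ∑ x, μ x = 1) {ε : ℝ}
    (hε : 0 ≤ ε) (hbias : ∀ S : Finset ι, S.Nonempty → |∑ x, μ x * ∏ i ∈ S, pm (x i)| ≤ ε)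
    (S : Finset ι) :
    |∑ x, (μ x - (Fintype.card (ι → Bool) : ℝ)⁻¹) * ∏ i ∈ S, pm (x i)| ≤ ε := by
  rcases S.eq_empty_or_nonempty with rfl | hS
  · simp [sum_sub_distrib, hμ1, hε]
  · simpa [sub_mul, sum_sub_distrib, ← mul_sum, sum_prod_pm_eq_zero hS] using hbias S hS

end Characters

lemma sum_fin_succ_bool {M : Type*} [AddCommMonoid M] {n : ℕ} (F : (Fin (n + 1) → Bool) → M) :
    ∑ x, F x = ∑ y : Fin n → Bool, (F (Fin.cons true y) + F (Fin.cons false y)) := by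
  rw [← (Fin.consEquiv fun _ => Bool).sum_comp, Fintype.sum_prod_type, Fintype.sum_bool,
    sum_add_distrib]
  rfl

lemma sum_range_two_mul_add_one_of_odd {M : Type*} [AddCommMonoid M] (f : ℕ → M)
    (hf : ∀ j, Odd j → f j = 0) (m : ℕ) :
    ∑ j ∈ range (2 * m + 1), f j = ∑ l ∈ range (m + 1), f (2 * l) := by
  induction m with
  | zero => simp
  | succ m ih =>
    rw [show 2 * (m + 1) + 1 = 2 * m + 1 + 1 + 1 by ring, sum_range_succ, sum_range_succ, ih,
      hf _ (odd_two_mul_add_one m), add_zero, sum_range_succ _ (m + 1)]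
    rfl

lemma add_pow_two_mul_add_sub_pow_two_mul {R : Type*} [CommRing R] (w a : R) (m : ℕ) :
    (w + a) ^ (2 * m) + (w - a) ^ (2 * m) =
      2 * ∑ l ∈ range (m + 1),
        ((2 * m).choose (2 * l) : R) * (a ^ 2) ^ (m - l) * w ^ (2 * l) := by
  rw [sub_eq_add_neg, add_pow, add_pow, ← sum_add_distrib, sum_range_two_mul_add_one_of_odd,
    mul_sum]
  · refine sum_congr rfl fun l hl => ?_
    rw [← Nat.mul_sub, (even_two_mul _).neg_pow, pow_mul]
    ring
  · intro j hj
    rcases le_or_gt j (2 * m) with hjm | hjm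
    · rw [(Nat.Even.sub_odd hjm (even_two_mul m) hj).neg_pow]
      ring
    · simp [Nat.choose_eq_zero_of_lt hjm]

-- `(2m - 1)!!`, the `2m`-th moment of a standard Gaussian.
noncomputable def gaussianMoment (m : ℕ) : ℝ := (2 * m)! / (2 ^ m * m !)

lemma gaussianMoment_nonneg (m : ℕ) : 0 ≤ gaussianMoment m := by
  unfold gaussianMoment; positivity

lemma gaussianMoment_le_pow_self (m : ℕ) : gaussianMoment m ≤ (m : ℝ) ^ m := by
  have h : ((2 * m)! : ℝ) = m ! * (2 * m).descFactorial m := by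
    rw [← Nat.cast_mul, ← Nat.factorial_mul_descFactorial (by omega : m ≤ 2 * m),
      show 2 * m - m = m by omega]
  rw [gaussianMoment, h, div_le_iff₀ (by positivity)]
  calc (m ! : ℝ) * (2 * m).descFactorial m ≤ m ! * (2 * m : ℕ) ^ m := by
        gcongr; exact_mod_cast Nat.descFactorial_le_pow _ _
    _ = m ^ m * (2 ^ m * m !) := by push_cast; ring

lemma choose_mul_gaussianMoment_le {l m : ℕ} (h : l ≤ m) :
    ((2 * m).choose (2 * l) : ℝ) * gaussianMoment l ≤ gaussianMoment m * m.choose l := by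
  obtain ⟨r, rfl⟩ := Nat.exists_eq_add_of_le h
  have hr : (2 ^ r * r ! : ℝ) ≤ (2 * r)! := by
    exact_mod_cast Nat.doubleFactorial_two_mul r ▸ Nat.doubleFactorial_le_factorial (2 * r)
  rw [mul_add, Nat.cast_add_choose, Nat.cast_add_choose, gaussianMoment, gaussianMoment]
  calc ((2 * l + 2 * r)! / ((2 * l)! * (2 * r)!) : ℝ) * ((2 * l)! / (2 ^ l * l !))
      = (2 * l + 2 * r)! / ((2 * r)! * (2 ^ l * l !)) := by field_simp
    _ ≤ (2 * l + 2 * r)! / ((2 ^ r * r !) * (2 ^ l * l !)) := by gcongr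
    _ = (2 * (l + r))! / (2 ^ (l + r) * (l + r)!) * ((l + r)! / (l ! * r !)) := by
        rw [mul_add]; field_simp; ring

lemma gaussianMoment_div_pow_le {t : ℝ} {m : ℕ} (ht : 0 < t) (h₁ : 2 * m ≤ t ^ 2)
    (h₂ : t ^ 2 < 2 * m + 2) :
    gaussianMoment m / t ^ (2 * m) ≤ 2 * Real.exp (-t ^ 2 / 4) := by
  have hhalf : (1 / 2 : ℝ) ≤ Real.exp (-(1 / 2)) := by
    linarith [Real.add_one_le_exp (-(1 / 2))]
  calc gaussianMoment m / t ^ (2 * m) ≤ (t ^ 2 / 2) ^ m / (t ^ 2) ^ m := by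
        rw [← pow_mul]
        gcongr
        exact (gaussianMoment_le_pow_self m).trans (by gcongr; linarith)
    _ = 2 * (1 / 2) ^ (m + 1) := by field_simp; ring
    _ ≤ 2 * Real.exp (-(1 / 2)) ^ (m + 1) := by gcongr
    _ ≤ 2 * Real.exp (-t ^ 2 / 4) := by
        rw [← Real.exp_nat_mul]
        gcongr
        push_cast
        linarith

lemma sum_rademacher_pow_two_mul_le (n : ℕ) (v : Fin n → ℝ) (m : ℕ) :
    ∑ x : Fin n → Bool, (∑ i, v i * pm (x i)) ^ (2 * m) ≤
      2 ^ n * gaussianMoment m * (∑ i, v i ^ 2) ^ m := by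
  induction n generalizing m with
  | zero => cases m <;> simp [gaussianMoment]
  | succ n ih =>
    set a := v 0
    set σ := ∑ i : Fin n, v i.succ ^ 2
    set W : (Fin n → Bool) → ℝ := fun y => ∑ i, v i.succ * pm (y i)
    have hcons (b : Bool) (y : Fin n → Bool) :
        ∑ i, v i * pm ((Fin.cons b y : Fin (n + 1) → Bool) i) = W y + a * pm b := by
      rw [Fin.sum_univ_succ, add_comm]
      simp [W, a]
    have hterm : ∀ l ∈ range (m + 1),
        ((2 * m).choose (2 * l) : ℝ) * (a ^ 2) ^ (m - l) * ∑ y, W y ^ (2 * l) ≤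
          2 ^ n * gaussianMoment m * (m.choose l * σ ^ l * (a ^ 2) ^ (m - l)) := by
      intro l hl
      calc ((2 * m).choose (2 * l) : ℝ) * (a ^ 2) ^ (m - l) * ∑ y, W y ^ (2 * l)
          ≤ ((2 * m).choose (2 * l) : ℝ) * (a ^ 2) ^ (m - l) *
              (2 ^ n * gaussianMoment l * σ ^ l) := by gcongr; exact ih _ l
        _ = 2 ^ n * (((2 * m).choose (2 * l) : ℝ) * gaussianMoment l) * σ ^ l *
              (a ^ 2) ^ (m - l) := by ring
        _ ≤ 2 ^ n * (gaussianMoment m * m.choose l) * σ ^ l * (a ^ 2) ^ (m - l) := by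
            have := gaussianMoment_nonneg m
            gcongr 2 ^ n * ?_ * _ * _
            exact choose_mul_gaussianMoment_le (Nat.lt_succ_iff.mp (mem_range.mp hl))
        _ = _ := by ring
    rw [sum_fin_succ_bool]
    simp only [hcons, pm_true, pm_false, mul_one, mul_neg_one, ← sub_eq_add_neg,
      add_pow_two_mul_add_sub_pow_two_mul, ← mul_sum]
    rw [sum_comm]
    simp only [← mul_sum]
    calc 2 * ∑ l ∈ range (m + 1), ((2 * m).choose (2 * l) : ℝ) * (a ^ 2) ^ (m - l) *
          ∑ y, W y ^ (2 * l)
        ≤ 2 * ∑ l ∈ range (m + 1), 2 ^ n * gaussianMoment m *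
            (m.choose l * σ ^ l * (a ^ 2) ^ (m - l)) := by gcongr 2 * ?_; exact sum_le_sum hterm
      _ = 2 ^ (n + 1) * gaussianMoment m * (σ + a ^ 2) ^ m := by
          rw [← mul_sum, add_pow]
          simp only [mul_comm ((m.choose _ : ℕ) : ℝ), mul_assoc]
          ring
      _ = 2 ^ (n + 1) * gaussianMoment m * (∑ i, v i ^ 2) ^ m := by
          rw [Fin.sum_univ_succ, add_comm (v 0 ^ 2)]

lemma sum_mul_pow_two_mul_le_of_biased {n : ℕ} (v : Fin n → ℝ) (μ : (Fin n → Bool) → ℝ)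
    (hμ1 : ∑ x, μ x = 1) {ε : ℝ} (hε : 0 ≤ ε)
    (hbias : ∀ S : Finset (Fin n), S.Nonempty → |∑ x, μ x * ∏ i ∈ S, pm (x i)| ≤ ε) (m : ℕ) :
    ∑ x, μ x * (∑ i, v i * pm (x i)) ^ (2 * m) ≤
      gaussianMoment m * (∑ i, v i ^ 2) ^ m + ε * (∑ i, |v i|) ^ (2 * m) := by
  set u : ℝ := (Fintype.card (Fin n → Bool) : ℝ)⁻¹
  have huniform : ∑ x : Fin n → Bool, u * (∑ i, v i * pm (x i)) ^ (2 * m) ≤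
      gaussianMoment m * (∑ i, v i ^ 2) ^ m := by
    have hu : u = (2 ^ n)⁻¹ := by simp [u]
    rw [← mul_sum, hu, inv_mul_le_iff₀ (by positivity), ← mul_assoc]
    exact sum_rademacher_pow_two_mul_le n v m
  have hdiff := le_of_abs_le <| abs_sum_mul_pow_le v _
    (abs_sum_sub_uniform_mul_prod_pm_le μ hμ1 hε hbias) (2 * m)
  simp only [sub_mul, sum_sub_distrib] at hdiff
  linarith

lemma sum_mul_ite_lt_abs_le {α : Type*} [Fintype α] {μ : α → ℝ} (hμ : ∀ x, 0 ≤ μ x)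
    (Z : α → ℝ) {t : ℝ} (ht : 0 < t) (m : ℕ) :
    ∑ x, μ x * (if t < |Z x| then (1 : ℝ) else 0) ≤
      (∑ x, μ x * Z x ^ (2 * m)) / t ^ (2 * m) := by
  rw [sum_div]
  refine sum_le_sum fun x _ => ?_
  rw [mul_div_assoc]
  refine mul_le_mul_of_nonneg_left ?_ (hμ x)
  split_ifs with h
  · rw [one_le_div (by positivity), ← (even_two_mul m).pow_abs (Z x)]
    exact pow_le_pow_left₀ ht.le h.le _
  · exact div_nonneg ((even_two_mul m).pow_nonneg _) (by positivity)

lemma sq_sum_abs_le_card_support_mul {ι : Type*} [Fintype ι] (v : ι → ℝ) :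
    (∑ i, |v i|) ^ 2 ≤ #{i | v i ≠ 0} * ∑ i, v i ^ 2 := by
  rw [← sum_filter_of_ne (f := fun i => |v i|) fun i _ h => abs_ne_zero.mp h,
    ← sum_filter_of_ne (f := fun i => v i ^ 2) fun i _ h => (pow_ne_zero_iff two_ne_zero).mp h]
  simpa only [sq_abs] using
    sq_sum_le_card_mul_sum_sq (s := {i | v i ≠ 0}) (f := fun i => |v i|)

theorem stmt2 (n : ℕ) (v : Fin n → ℝ) (hv : ∑ i, v i ^ 2 = 1)
    (ε : ℝ) (μ : (Fin n → Bool) → ℝ) (hμ0 : ∀ x, 0 ≤ μ x) (hμ1 : ∑ x, μ x = 1)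
    (hbias : ∀ S : Finset (Fin n), S.Nonempty →
      |∑ x, μ x * ∏ i ∈ S, pm (x i)| ≤ ε)
    (t : ℝ) (ht : 1 ≤ t) :
    ∑ x, μ x * (if t < |∑ i, v i * pm (x i)| then (1:ℝ) else 0) ≤
      2 * Real.exp (-t ^ 2 / 4)
        + ((univ.filter fun i => v i ≠ 0).card : ℝ) ^ (t ^ 2) * ε := by
  obtain ⟨i₀, -, hi₀⟩ := exists_ne_zero_of_sum_ne_zero (hv ▸ one_ne_zero : ∑ i, v i ^ 2 ≠ 0)
  have hε : 0 ≤ ε := (abs_nonneg _).trans (hbias {i₀} (singleton_nonempty i₀))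
  set s : ℝ := ((univ.filter fun i => v i ≠ 0).card : ℝ)
  have hs : 1 ≤ s := Nat.one_le_cast.mpr <| card_pos.mpr
    ⟨i₀, by simpa using (pow_ne_zero_iff two_ne_zero).mp hi₀⟩
  have ht₀ : 0 < t := by linarith
  set m := ⌊t ^ 2 / 2⌋₊
  have hm₁ : 2 * m ≤ t ^ 2 := by linarith [Nat.floor_le (by positivity : 0 ≤ t ^ 2 / 2)]
  have hm₂ : t ^ 2 < 2 * m + 2 := by linarith [Nat.lt_floor_add_one (t ^ 2 / 2)]
  have hl1 : (∑ i, |v i|) ^ (2 * m) ≤ s ^ m := by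
    rw [pow_mul]
    gcongr
    simpa [hv] using sq_sum_abs_le_card_support_mul v
  have hmoment := sum_mul_pow_two_mul_le_of_biased v μ hμ1 hε hbias m
  rw [hv, one_pow, mul_one] at hmoment
  calc ∑ x, μ x * (if t < |∑ i, v i * pm (x i)| then (1:ℝ) else 0)
      ≤ (∑ x, μ x * (∑ i, v i * pm (x i)) ^ (2 * m)) / t ^ (2 * m) :=
        sum_mul_ite_lt_abs_le hμ0 _ ht₀ m
    _ ≤ (gaussianMoment m + ε * s ^ m) / t ^ (2 * m) := by
        gcongr
        linarith [mul_le_mul_of_nonneg_left hl1 hε]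
    _ ≤ gaussianMoment m / t ^ (2 * m) + ε * s ^ m := by
        rw [add_div]
        gcongr
        exact div_le_self (by positivity) (one_le_pow₀ ht)
    _ ≤ 2 * Real.exp (-t ^ 2 / 4) + s ^ (t ^ 2) * ε := by
        rw [mul_comm ε, ← Real.rpow_natCast s m]
        gcongr
        · exact gaussianMoment_div_pow_le ht₀ hm₁ hm₂
        · linarith
end

section
/- Let v ∈ ℝ^n and let H = {h : [n] → [m]} be a δ-biased family of hash functions. For h ∈ H define h(v) = Σ_{j=1}^m ‖v restricted to h^{−1}(j)‖_2^4. Then for every integer p ≥ 2, E_{h}[h(v)^p] ≤ O(p)^{2p}·(‖v‖_2^4/m)^p + O(p)^{2p}·‖v‖_4^{4p} + m^p·‖v‖_2^{4p}·δ. -/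
/-!
Expanding `h(v)^p` writes `E_h[h(v)^p]` as a sum, over maps `t` from the `2p` slots
`Fin p × Bool` to coordinates, of `∏ₛ v(tₛ)²` times the probability that `h` collides on each
of the `p` pairs of slots `(k, true), (k, false)`. That probability is a sum over bucket
assignments `J` of the pairs; only the `J` consistent with `t` contribute, each at most
`m^{-|im t|} + δ`. A value taken at a single slot (a lonely value) must share its bucket with the
other slot of its pair, so choosing one lonely value per pair gives a set `D` with
`|D| ≥ #lonely / 2` whose buckets are determined by the rest: there are at most `m^{|im t| - |D|}`
consistent `J`, and the probability is at most `m^{-#lonely/2} + m^p δ`.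

To sum `∏ₛ v(tₛ)² · m^{-#lonely t / 2}` over `t`, group the maps `t` by their kernel, of which
there are at most `(2p)^{2p}`. For a fixed kernel, a class of size one contributes `‖v‖₂²` and a
class of size `c ≥ 2` contributes `∑ᵢ vᵢ^{2c} ≤ ‖v‖₄^{2c}`, so each kernel contributes at most
`(‖v‖₂² / √m)^L ‖v‖₄^{2(2p-L)} ≤ (‖v‖₂⁴/m)^p + ‖v‖₄^{4p}`, where `L` is the number of lonely slots.
-/

open Finset

namespace HashMoment

section Kernel

variable {S ι : Type*}

noncomputable def rep (t : S → ι) (s : S) : S :=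
  (⟨s, rfl⟩ : ∃ s', t s' = t s).choose

lemma apply_rep (t : S → ι) (s : S) : t (rep t s) = t s :=
  (⟨s, rfl⟩ : ∃ s', t s' = t s).choose_spec

lemma rep_eq_rep_iff {t : S → ι} {s s' : S} : rep t s = rep t s' ↔ t s = t s' := by
  refine ⟨fun h => by rw [← apply_rep t s, h, apply_rep t s'], fun h => ?_⟩
  unfold rep
  congr 2
  rw [h]

variable [Fintype S] [DecidableEq S] [DecidableEq ι]

def lonely (t : S → ι) : Finset S := {s | ∀ s', t s' = t s → s' = s}

lemma mem_lonely {t : S → ι} {s : S} : s ∈ lonely t ↔ ∀ s', t s' = t s → s' = s := by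
  simp [lonely]

lemma lonely_congr {ι' : Type*} [DecidableEq ι'] {t : S → ι} {u : S → ι'}
    (h : ∀ s s', t s = t s' ↔ u s = u s') : lonely t = lonely u := by
  ext s
  simp only [mem_lonely, h]

lemma lonely_rep (t : S → ι) : lonely (rep t) = lonely t :=
  lonely_congr fun _ _ => rep_eq_rep_iff

lemma mem_of_apply_mem_image {t : S → ι} {F : Finset S} (hF : F ⊆ lonely t)
    {s : S} (h : t s ∈ F.image t) : s ∈ F := by
  obtain ⟨s₀, hs₀, hts⟩ := mem_image.mp h
  rwa [mem_lonely.mp (hF hs₀) s hts.symm]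

end Kernel

lemma sum_pow_le_sqrt_sum_sq_pow {ι : Type*} [Fintype ι] {x : ι → ℝ} (hx : 0 ≤ x) {c : ℕ}
    (hc : 2 ≤ c) : ∑ i, x i ^ c ≤ √(∑ i, x i ^ 2) ^ c := by
  set β := √(∑ i, x i ^ 2)
  have hxβ (i : ι) : x i ≤ β :=
    Real.le_sqrt_of_sq_le (single_le_sum (fun j _ => sq_nonneg (x j)) (mem_univ i))
  calc ∑ i, x i ^ c = ∑ i, x i ^ (c - 2) * x i ^ 2 := by
        simp_rw [← pow_add, Nat.sub_add_cancel hc]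
    _ ≤ ∑ i, β ^ (c - 2) * x i ^ 2 := by
        gcongr with i
        · exact hx i
        · exact hxβ i
    _ = β ^ c := by
        rw [← mul_sum, ← Real.sq_sqrt (sum_nonneg fun i _ => sq_nonneg (x i)), ← pow_add,
          Nat.sub_add_cancel hc]

lemma pow_mul_pow_sub_le_pow_add_pow {x y : ℝ} (hx : 0 ≤ x) (hy : 0 ≤ y) {k N : ℕ} (hk : k ≤ N) :
    x ^ k * y ^ (N - k) ≤ x ^ N + y ^ N := by
  rcases le_total x y with h | h
  · calc x ^ k * y ^ (N - k) ≤ y ^ k * y ^ (N - k) := by gcongr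
      _ = y ^ N := by rw [← pow_add, Nat.add_sub_cancel' hk]
      _ ≤ x ^ N + y ^ N := le_add_of_nonneg_left (pow_nonneg hx N)
  · calc x ^ k * y ^ (N - k) ≤ x ^ k * x ^ (N - k) := by gcongr
      _ = x ^ N := by rw [← pow_add, Nat.add_sub_cancel' hk]
      _ ≤ x ^ N + y ^ N := le_add_of_nonneg_right (pow_nonneg hy N)

lemma sum_prod_le_prod_sum_pow_card_fiber {S ι : Type*} [Fintype S] [DecidableEq S] [Fintype ι]
    [DecidableEq ι] (f : S → S) {w : ι → ℝ} (hw : 0 ≤ w) :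
    ∑ t ∈ univ.filter fun t : S → ι => ∀ s, t (f s) = t s, ∏ s, w (t s) ≤
      ∏ r ∈ univ.image f, ∑ i, w i ^ #{s | f s = r} := by
  set R := univ.image f
  set A := univ.filter fun t : S → ι => ∀ s, t (f s) = t s
  let restrict (t : S → ι) : (r : S) → r ∈ R → ι := fun r _ => t r
  have hinj : Set.InjOn restrict A := by
    intro t ht u hu htu
    funext s
    have hs : f s ∈ R := mem_image_of_mem f (mem_univ s)
    rw [← (mem_filter.mp ht).2 s, ← (mem_filter.mp hu).2 s]
    exact congrFun (congrFun htu (f s)) hs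
  rw [prod_sum]
  calc ∑ t ∈ A, ∏ s, w (t s)
      = ∑ t ∈ A, ∏ r ∈ R.attach, w (restrict t r r.2) ^ #{s | f s = r} := by
        refine sum_congr rfl fun t ht => ?_
        rw [prod_attach R fun r => w (t r) ^ #{s | f s = r}, ← prod_comp (fun i => w (t i)) f]
        exact prod_congr rfl fun s _ => by rw [(mem_filter.mp ht).2 s]
    _ = ∑ g ∈ A.image restrict, ∏ r ∈ R.attach, w (g r r.2) ^ #{s | f s = r} := by
        rw [sum_image hinj]
    _ ≤ ∑ g ∈ R.pi fun _ => (univ : Finset ι), ∏ r ∈ R.attach, w (g r r.2) ^ #{s | f s = r} :=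
        sum_le_sum_of_subset_of_nonneg (fun g _ => mem_pi.mpr fun _ _ => mem_univ _)
          fun g _ _ => prod_nonneg fun r _ => pow_nonneg (hw _) _

lemma prod_sum_pow_card_fiber_le {S R ι : Type*} [Fintype S] [DecidableEq S] [DecidableEq R]
    [Fintype ι] (f : S → R) {x : ι → ℝ} (hx : 0 ≤ x) :
    ∏ r ∈ univ.image f, ∑ i, x i ^ #{s | f s = r} ≤
      (∑ i, x i) ^ #(lonely f) * √(∑ i, x i ^ 2) ^ (Fintype.card S - #(lonely f)) := by
  set β := √(∑ i, x i ^ 2)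
  let g (s : S) : ℝ := if s ∈ lonely f then ∑ i, x i else β
  have hfiber (r : R) (hr : r ∈ univ.image f) :
      ∑ i, x i ^ #{s | f s = r} ≤ ∏ s with f s = r, g s := by
    obtain ⟨s₀, -, rfl⟩ := mem_image.mp hr
    have hpos : 0 < #{s | f s = f s₀} := card_pos.mpr ⟨s₀, by simp⟩
    rcases (Nat.succ_le_of_lt hpos).eq_or_lt with h1 | h2
    · obtain ⟨s₁, hs₁⟩ := card_eq_one.mp h1.symm
      have hmem (s : S) : f s = f s₀ ↔ s = s₁ := by simpa using Finset.ext_iff.mp hs₁ s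
      have hl : s₁ ∈ lonely f :=
        mem_lonely.mpr fun s' hs' => (hmem s').mp (hs'.trans ((hmem s₁).mpr rfl))
      simp [hs₁, g, hl]
    · have hnl : ∀ s ∈ ({s | f s = f s₀} : Finset S), g s = β := by
        intro s hs
        obtain ⟨a, ha, b, hb, hab⟩ := one_lt_card.mp h2
        have hfa := (mem_filter.mp ha).2
        have hfb := (mem_filter.mp hb).2
        have hfs := (mem_filter.mp hs).2
        have : s ∉ lonely f := fun hl => hab <|
          (mem_lonely.mp hl a (hfa.trans hfs.symm)).trans
            (mem_lonely.mp hl b (hfb.trans hfs.symm)).symm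
        simp [g, this]
      rw [prod_congr rfl hnl, prod_const]
      exact sum_pow_le_sqrt_sum_sq_pow hx h2
  calc ∏ r ∈ univ.image f, ∑ i, x i ^ #{s | f s = r}
      ≤ ∏ r ∈ univ.image f, ∏ s with f s = r, g s :=
        prod_le_prod (fun r _ => sum_nonneg fun i _ => pow_nonneg (hx i) _) hfiber
    _ = ∏ s, g s := prod_fiberwise_of_maps_to (fun s _ => mem_image_of_mem f (mem_univ s)) g
    _ = (∑ i, x i) ^ #(lonely f) * β ^ (Fintype.card S - #(lonely f)) := by
        rw [← prod_mul_prod_compl (lonely f), prod_congr rfl fun s hs => if_pos hs,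
          prod_congr rfl fun s hs => if_neg (mem_compl.mp hs), prod_const, prod_const, card_compl]

lemma sum_prod_mul_pow_card_lonely_le {S ι : Type*} [Fintype S] [DecidableEq S] [Fintype ι]
    [DecidableEq ι] {x : ι → ℝ} (hx : 0 ≤ x) {α : ℝ} (hα : 0 ≤ α) :
    ∑ t : S → ι, (∏ s, x (t s)) * α ^ #(lonely t) ≤
      (Fintype.card S : ℝ) ^ Fintype.card S *
        ((α * ∑ i, x i) ^ Fintype.card S + √(∑ i, x i ^ 2) ^ Fintype.card S) := by
  set N := Fintype.card S
  have hπ (π : S → S) :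
      ∑ t with rep t = π, (∏ s, x (t s)) * α ^ #(lonely t) ≤
        (α * ∑ i, x i) ^ N + √(∑ i, x i ^ 2) ^ N := by
    have hsub : (univ.filter fun t : S → ι => rep t = π) ⊆
        univ.filter fun t : S → ι => ∀ s, t (π s) = t s := fun t ht =>
      mem_filter.mpr ⟨mem_univ t, (mem_filter.mp ht).2 ▸ apply_rep t⟩
    calc ∑ t with rep t = π, (∏ s, x (t s)) * α ^ #(lonely t)
        = (∑ t with rep t = π, ∏ s, x (t s)) * α ^ #(lonely π) := by
          rw [sum_mul]
          refine sum_congr rfl fun t ht => ?_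
          rw [← (mem_filter.mp ht).2, lonely_rep]
      _ ≤ (∏ r ∈ univ.image π, ∑ i, x i ^ #{s | π s = r}) * α ^ #(lonely π) := by
          gcongr
          exact (sum_le_sum_of_subset_of_nonneg hsub fun t _ _ =>
            prod_nonneg fun s _ => hx (t s)).trans (sum_prod_le_prod_sum_pow_card_fiber π hx)
      _ ≤ ((∑ i, x i) ^ #(lonely π) * √(∑ i, x i ^ 2) ^ (N - #(lonely π))) * α ^ #(lonely π) := by
          gcongr
          exact prod_sum_pow_card_fiber_le π hx
      _ = (α * ∑ i, x i) ^ #(lonely π) * √(∑ i, x i ^ 2) ^ (N - #(lonely π)) := by ring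
      _ ≤ (α * ∑ i, x i) ^ N + √(∑ i, x i ^ 2) ^ N :=
          pow_mul_pow_sub_le_pow_add_pow (mul_nonneg hα (sum_nonneg fun i _ => hx i))
            (Real.sqrt_nonneg _) (card_le_univ _)
  rw [← sum_fiberwise univ rep]
  calc ∑ π : S → S, ∑ t with rep t = π, (∏ s, x (t s)) * α ^ #(lonely t)
      ≤ ∑ _π : S → S, ((α * ∑ i, x i) ^ N + √(∑ i, x i ^ 2) ^ N) := sum_le_sum fun π _ => hπ π
    _ = (N : ℝ) ^ N * ((α * ∑ i, x i) ^ N + √(∑ i, x i ^ 2) ^ N) := by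
        rw [sum_const, card_univ, Fintype.card_fun, nsmul_eq_mul, Nat.cast_pow]

section Pairs

variable {κ ι : Type*} [Fintype κ] [DecidableEq κ] [DecidableEq ι]

def lonelyTransversal (t : κ × Bool → ι) : Finset ι :=
  ((lonely t).filter fun s => (s.1, !s.2) ∈ lonely t → s.2 = true).image t

lemma lonelyTransversal_subset (t : κ × Bool → ι) : lonelyTransversal t ⊆ univ.image t :=
  image_subset_image (subset_univ _)

lemma apply_notMem_lonelyTransversal {t : κ × Bool → ι} {s : κ × Bool}
    (hs : t s ∈ lonelyTransversal t) : t (s.1, !s.2) ∉ lonelyTransversal t := by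
  intro hs'
  have h₁ := mem_filter.mp (mem_of_apply_mem_image (filter_subset _ _) hs)
  have h₂ := mem_filter.mp (mem_of_apply_mem_image (filter_subset _ _) hs')
  have htrue := h₁.2 h₂.1
  have hfalse := h₂.2 (by simpa using h₁.1)
  simp [htrue] at hfalse

lemma card_lonely_le_two_mul_card_lonelyTransversal (t : κ × Bool → ι) :
    #(lonely t) ≤ 2 * #(lonelyTransversal t) := by
  set L₁ := (lonely t).filter fun s => (s.1, !s.2) ∈ lonely t → s.2 = true
  have hinj : Set.InjOn t L₁ := fun a ha b _ hab =>
    (mem_lonely.mp (filter_subset _ _ ha) b hab.symm).symm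
  have hcover : lonely t ⊆ L₁ ∪ L₁.image fun s : κ × Bool => (s.1, !s.2) := by
    intro s hs
    by_cases h₁ : s ∈ L₁
    · exact mem_union_left _ h₁
    · have ⟨hpartner, hfalse⟩ : (s.1, !s.2) ∈ lonely t ∧ s.2 = false := by
        simpa [L₁, hs] using h₁
      refine mem_union_right _ (mem_image.mpr ⟨(s.1, !s.2), mem_filter.mpr ⟨hpartner, ?_⟩, ?_⟩)
      · simp [hfalse]
      · simp
  calc #(lonely t) ≤ #L₁ + #(L₁.image fun s : κ × Bool => (s.1, !s.2)) :=
        (card_le_card hcover).trans (card_union_le _ _)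
    _ ≤ #L₁ + #L₁ := Nat.add_le_add_left card_image_le _
    _ = 2 * #(lonelyTransversal t) := by rw [lonelyTransversal, card_image_of_injOn hinj]; ring

lemma card_consistent_le (m : ℕ) [NeZero m] (t : κ × Bool → ι) {D : Finset ι}
    (hD : ∀ s, t s ∈ D → t (s.1, !s.2) ∉ D) :
    #{J : κ → Fin m | ∀ s s', t s = t s' → J s.1 = J s'.1} ≤ m ^ #(univ.image t \ D) := by
  let lift (J : κ → Fin m) : (i : ι) → i ∈ univ.image t \ D → Fin m :=
    fun i _ => Function.extend t (J ∘ Prod.fst) 0 i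
  have hinj : Set.InjOn lift {J | ∀ s s', t s = t s' → J s.1 = J s'.1} := by
    intro J hJ J' hJ' hJJ'
    funext k
    obtain ⟨b, hb⟩ : ∃ b, t (k, b) ∉ D := by
      by_cases h : t (k, true) ∈ D
      · exact ⟨false, hD _ h⟩
      · exact ⟨true, h⟩
    have hmem : t (k, b) ∈ univ.image t \ D :=
      mem_sdiff.mpr ⟨mem_image_of_mem t (mem_univ _), hb⟩
    have : Function.extend t (J ∘ Prod.fst) 0 (t (k, b)) =
        Function.extend t (J' ∘ Prod.fst) 0 (t (k, b)) := congrFun (congrFun hJJ' (t (k, b))) hmem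
    rwa [Function.FactorsThrough.extend_apply (g := J ∘ Prod.fst) hJ,
      Function.FactorsThrough.extend_apply (g := J' ∘ Prod.fst) hJ'] at this
  calc #{J : κ → Fin m | ∀ s s', t s = t s' → J s.1 = J s'.1}
      ≤ #((univ.image t \ D).pi fun _ => (univ : Finset (Fin m))) :=
        card_le_card_of_injOn lift (fun J _ => mem_pi.mpr fun _ _ => mem_univ _)
          (by simpa using hinj)
    _ = m ^ #(univ.image t \ D) := by simp

end Pairs

section Biased

variable {κ ι : Type*} [Fintype κ] [DecidableEq κ] [Fintype ι] [DecidableEq ι] {m : ℕ}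

def IsBiased (ν : (ι → Fin m) → ℝ) (δ : ℝ) : Prop :=
  ∀ (T : Finset ι) (j : ι → Fin m),
    |(∑ h, ν h * (if ∀ i ∈ T, h i = j i then (1:ℝ) else 0)) - (1 / (m:ℝ)) ^ T.card| ≤ δ

lemma IsBiased.nonneg [NeZero m] {ν : (ι → Fin m) → ℝ} {δ : ℝ} (hν : IsBiased ν δ) : 0 ≤ δ :=
  (abs_nonneg _).trans (hν ∅ 0)

lemma IsBiased.sum_le {ν : (ι → Fin m) → ℝ} {δ : ℝ} (hν : IsBiased ν δ) (T : Finset ι)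
    (j : ι → Fin m) :
    ∑ h, ν h * (if ∀ i ∈ T, h i = j i then (1:ℝ) else 0) ≤ (1 / (m:ℝ)) ^ #T + δ := by
  linarith [(abs_le.mp (hν T j)).2]

/-- The left side is the probability that `h` collides on every pair `(k, true), (k, false)`. -/
lemma IsBiased.sum_prob_collide_le [NeZero m] {ν : (ι → Fin m) → ℝ} {δ : ℝ} (hν : IsBiased ν δ)
    (t : κ × Bool → ι) :
    ∑ J : κ → Fin m, ∑ h, ν h * (if ∀ s, h (t s) = J s.1 then (1:ℝ) else 0) ≤
      (√m)⁻¹ ^ #(lonely t) + m ^ Fintype.card κ * δ := by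
  set T := univ.image t
  set D := lonelyTransversal t
  set F := ({J | ∀ s s', t s = t s' → J s.1 = J s'.1} : Finset (κ → Fin m))
  have hm : (1 : ℝ) ≤ m := Nat.one_le_cast.mpr NeZero.one_le
  have hδ := hν.nonneg
  have hJ (J : κ → Fin m) :
      ∑ h, ν h * (if ∀ s, h (t s) = J s.1 then (1:ℝ) else 0) ≤
        if J ∈ F then (1 / (m:ℝ)) ^ #T + δ else 0 := by
    split_ifs with hJ
    · have hJ' : Function.FactorsThrough (J ∘ Prod.fst) t := (mem_filter.mp hJ).2
      have hevent (h : ι → Fin m) : (∀ s, h (t s) = J s.1) ↔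
          ∀ i ∈ T, h i = Function.extend t (J ∘ Prod.fst) 0 i := by
        simp only [T, forall_mem_image, mem_univ, true_implies, hJ'.extend_apply,
          Function.comp_apply]
      simp_rw [hevent]
      exact hν.sum_le T _
    · refine (sum_eq_zero fun h _ => ?_).le
      rw [if_neg, mul_zero]
      intro hh
      exact hJ (mem_filter.mpr ⟨mem_univ J, fun s s' hs => by rw [← hh s, ← hh s', hs]⟩)
  have hFD : (#F : ℝ) ≤ m ^ #(T \ D) := by
    exact_mod_cast card_consistent_le m t fun s => apply_notMem_lonelyTransversal
  have hFK : (#F : ℝ) ≤ m ^ Fintype.card κ := by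
    exact_mod_cast (card_le_univ F).trans (by simp)
  have hT : #T = #(T \ D) + #D := (card_sdiff_add_card_eq_card (lonelyTransversal_subset t)).symm
  have hsqrt : (1 / (m:ℝ)) = (√m)⁻¹ ^ 2 := by rw [inv_pow, Real.sq_sqrt (by positivity), one_div]
  calc ∑ J : κ → Fin m, ∑ h, ν h * (if ∀ s, h (t s) = J s.1 then (1:ℝ) else 0)
      ≤ ∑ J : κ → Fin m, if J ∈ F then (1 / (m:ℝ)) ^ #T + δ else 0 := sum_le_sum fun J _ => hJ J
    _ = #F * (1 / (m:ℝ)) ^ #T + #F * δ := by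
        rw [sum_ite_mem, univ_inter, sum_const, nsmul_eq_mul, mul_add]
    _ ≤ m ^ #(T \ D) * (1 / (m:ℝ)) ^ #T + m ^ Fintype.card κ * δ := by gcongr
    _ = (1 / (m:ℝ)) ^ #D + m ^ Fintype.card κ * δ := by
        rw [hT, pow_add, ← mul_assoc, ← mul_pow, mul_one_div_cancel (by positivity), one_pow,
          one_mul]
    _ ≤ (√m)⁻¹ ^ #(lonely t) + m ^ Fintype.card κ * δ := by
        rw [hsqrt, ← pow_mul]
        exact add_le_add (pow_le_pow_of_le_one (by positivity)
          (inv_le_one_of_one_le₀ (Real.one_le_sqrt.mpr hm))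
          (card_lonely_le_two_mul_card_lonelyTransversal t)) le_rfl

end Biased

section Expansion

variable {κ ι β : Type*} [Fintype κ] [DecidableEq κ] [Fintype ι] [Fintype β] [DecidableEq β]

lemma sum_sq_sum_fiber_pow_card (h : ι → β) (x : ι → ℝ) :
    (∑ j, (∑ i ∈ univ.filter fun i => h i = j, x i) ^ 2) ^ Fintype.card κ =
      ∑ t : κ × Bool → ι, ∑ J : κ → β, if ∀ s, h (t s) = J s.1 then ∏ s, x (t s) else 0 := by
  set G : β × (Bool → ι) → ℝ := fun a => ∏ b, if h (a.2 b) = a.1 then x (a.2 b) else 0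
  have hsq (j : β) : (∑ i ∈ univ.filter fun i => h i = j, x i) ^ 2 = ∑ u, G (j, u) := by
    rw [sum_filter, ← Fintype.card_bool, ← card_univ, ← prod_const, Fintype.prod_sum]
  let e : (κ → β × (Bool → ι)) ≃ (κ → β) × (κ × Bool → ι) :=
    (Equiv.arrowProdEquivProdArrow _ _ _).trans
      (Equiv.prodCongr (Equiv.refl _) (Equiv.curry _ _ _).symm)
  simp_rw [hsq]
  rw [← Fintype.sum_prod_type', ← card_univ, ← prod_const, Fintype.prod_sum,
    ← e.symm.sum_comp, Fintype.sum_prod_type, sum_comm]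
  refine sum_congr rfl fun t _ => sum_congr rfl fun J _ => ?_
  rw [← Fintype.prod_ite_zero, Fintype.prod_prod_type]
  rfl

lemma sum_mul_sum_sq_sum_fiber_pow_card [DecidableEq ι] (ν : (ι → β) → ℝ) (x : ι → ℝ) :
    ∑ h, ν h * (∑ j, (∑ i ∈ univ.filter fun i => h i = j, x i) ^ 2) ^ Fintype.card κ =
      ∑ t : κ × Bool → ι, (∏ s, x (t s)) *
        ∑ J : κ → β, ∑ h, ν h * (if ∀ s, h (t s) = J s.1 then (1:ℝ) else 0) := by
  simp_rw [sum_sq_sum_fiber_pow_card, mul_sum]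
  rw [sum_comm]
  refine sum_congr rfl fun t _ => ?_
  rw [sum_comm]
  refine sum_congr rfl fun J _ => sum_congr rfl fun h _ => ?_
  split_ifs <;> ring

end Expansion

theorem IsBiased.sum_mul_pow_le {κ ι : Type*} [Fintype κ] [DecidableEq κ] [Fintype ι]
    [DecidableEq ι] {m : ℕ} [NeZero m] {ν : (ι → Fin m) → ℝ} {δ : ℝ} (hν : IsBiased ν δ)
    {x : ι → ℝ} (hx : 0 ≤ x) :
    ∑ h, ν h * (∑ j, (∑ i ∈ univ.filter fun i => h i = j, x i) ^ 2) ^ Fintype.card κ ≤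
      (2 * Fintype.card κ : ℝ) ^ (2 * Fintype.card κ) * ((∑ i, x i) ^ 2 / m) ^ Fintype.card κ
      + (2 * Fintype.card κ : ℝ) ^ (2 * Fintype.card κ) * (∑ i, x i ^ 2) ^ Fintype.card κ
      + m ^ Fintype.card κ * (∑ i, x i) ^ (2 * Fintype.card κ) * δ := by
  set K := Fintype.card κ
  set α := (√m)⁻¹
  have hcard : Fintype.card (κ × Bool) = 2 * K := by simp [K, mul_comm]
  have hw (t : κ × Bool → ι) : 0 ≤ ∏ s, x (t s) := prod_nonneg fun s _ => hx (t s)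
  have htotal : ∑ t : κ × Bool → ι, ∏ s, x (t s) = (∑ i, x i) ^ (2 * K) := by
    rw [← Fintype.prod_sum (fun (_ : κ × Bool) i => x i), prod_const, card_univ, hcard]
  have hlonely := sum_prod_mul_pow_card_lonely_le (S := κ × Bool) hx (α := α) (by positivity)
  have hα : (α * ∑ i, x i) ^ (2 * K) = ((∑ i, x i) ^ 2 / m) ^ K := by
    rw [pow_mul, mul_pow, inv_pow, Real.sq_sqrt (Nat.cast_nonneg m), div_eq_inv_mul]
  have hβ : √(∑ i, x i ^ 2) ^ (2 * K) = (∑ i, x i ^ 2) ^ K := by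
    rw [pow_mul, Real.sq_sqrt (sum_nonneg fun i _ => sq_nonneg (x i))]
  rw [hcard, hα, hβ] at hlonely
  rw [sum_mul_sum_sq_sum_fiber_pow_card]
  calc ∑ t : κ × Bool → ι, (∏ s, x (t s)) *
        ∑ J : κ → Fin m, ∑ h, ν h * (if ∀ s, h (t s) = J s.1 then (1:ℝ) else 0)
      ≤ ∑ t : κ × Bool → ι, (∏ s, x (t s)) * (α ^ #(lonely t) + m ^ K * δ) :=
        sum_le_sum fun t _ => mul_le_mul_of_nonneg_left (hν.sum_prob_collide_le t) (hw t)
    _ = ∑ t : κ × Bool → ι, (∏ s, x (t s)) * α ^ #(lonely t)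
          + (∑ i, x i) ^ (2 * K) * (m ^ K * δ) := by
        rw [← htotal, sum_mul, ← sum_add_distrib]
        simp_rw [mul_add]
    _ ≤ _ := by
        rw [show ((2 * K : ℕ) : ℝ) = 2 * K by push_cast; ring] at hlonely
        linarith

end HashMoment

theorem stmt3 : ∃ C : ℝ, 0 < C ∧ ∀ (n m : ℕ), 0 < m → ∀ (δ : ℝ),
    ∀ (v : Fin n → ℝ) (ν : (Fin n → Fin m) → ℝ),
    (∀ h, 0 ≤ ν h) → (∑ h, ν h = 1) →
    -- ν is a δ-biased family of hash functions from [n] to [m]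
    (∀ (T : Finset (Fin n)) (j : Fin n → Fin m),
      |(∑ h, ν h * (if ∀ i ∈ T, h i = j i then (1:ℝ) else 0)) - (1 / (m:ℝ)) ^ T.card| ≤ δ) →
    ∀ p : ℕ, 2 ≤ p →
    -- E_h[h(v)^p] where h(v) = ∑_j ‖v|_{h⁻¹(j)}‖₂⁴
    ∑ h, ν h * (∑ j : Fin m, (∑ i ∈ univ.filter fun i => h i = j, v i ^ 2) ^ 2) ^ p ≤
      (C * p) ^ (2 * p) * ((∑ i, v i ^ 2) ^ 2 / m) ^ p
      + (C * p) ^ (2 * p) * (∑ i, v i ^ 4) ^ p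
      + (m : ℝ) ^ p * (∑ i, v i ^ 2) ^ (2 * p) * δ := by
  refine ⟨2, two_pos, fun n m hm δ v ν _ _ hν p _ => ?_⟩
  have : NeZero m := ⟨hm.ne'⟩
  -- `convert` only has to identify two `Decidable` instances of `∀ i ∈ T, h i = j i`.
  have hbias : HashMoment.IsBiased ν δ := fun T j => by convert hν T j
  have hpow (i : Fin n) : (v i ^ 2) ^ 2 = v i ^ 4 := by ring
  simpa only [Fintype.card_fin, hpow] using
    hbias.sum_mul_pow_le (κ := Fin p) (x := fun i => v i ^ 2) fun i => sq_nonneg (v i)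
end

section
/- Let n, m be positive integers, ε > 0, and let C be a sufficiently large constant. Let H = {h : [n] → [m]} be a k-wise independent family of hash functions with k = C·log(m/ε)/log(m). Let I ⊆ [n] satisfy |I|³ ≤ m. Then with probability at least 1 − ε over h uniform in H, |I| − |h(I)| ≤ k, where h(I) denotes the image of I under h. -/
/-!
If `h` loses more than `k` points of `I`, the collisions of `h` on `I` contain a star forest
of `t = ⌊k/2⌋` edges `a ↦ r a`: distinct leaves `a`, none of which is a centre `r a`. Such a
forest spans at most `2t ≤ k` points, so by `k`-wise independence all of its `t` collisions
happen with probability at most `m⁻ᵗ`. A union bound over the at most `(|I|²)ᵗ` forests bounds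
the failure probability by `(|I|²/m)ᵗ ≤ m^(-t/3)`, which is at most `ε` once `C = 6`.
-/

open Finset

section Prob

variable {Ω : Type*} [Fintype Ω] (ν : Ω → ℝ)

def prob (E : Ω → Prop) [DecidablePred E] : ℝ :=
  ∑ ω, ν ω * if E ω then 1 else 0

variable {ν}

lemma prob_mono (hν : ∀ ω, 0 ≤ ν ω) {E F : Ω → Prop} [DecidablePred E] [DecidablePred F]
    (hEF : ∀ ω, E ω → F ω) : prob ν E ≤ prob ν F := by
  refine sum_le_sum fun ω _ => mul_le_mul_of_nonneg_left ?_ (hν ω)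
  by_cases hF : F ω
  · simp only [hF, if_true]
    split_ifs <;> norm_num
  · simp [hF, mt (hEF ω) hF]

lemma prob_le_sum_prob (hν : ∀ ω, 0 ≤ ν ω) {ι : Type*} (X : Finset ι) (F : ι → Ω → Prop)
    [∀ i, DecidablePred (F i)] {E : Ω → Prop} [DecidablePred E]
    (hE : ∀ ω, E ω → ∃ i ∈ X, F i ω) : prob ν E ≤ ∑ i ∈ X, prob ν (F i) := by
  simp only [prob]
  rw [sum_comm]
  refine sum_le_sum fun ω _ => ?_
  rw [← mul_sum]
  refine mul_le_mul_of_nonneg_left ?_ (hν ω)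
  split_ifs with hω
  · obtain ⟨i, hi, hFi⟩ := hE ω hω
    exact (if_pos hFi).symm.le.trans (single_le_sum (f := fun j => if F j ω then (1 : ℝ) else 0)
      (fun j _ => by split_ifs <;> norm_num) hi)
  · exact sum_nonneg fun j _ => by split_ifs <;> norm_num

lemma prob_add_prob_not (E : Ω → Prop) [DecidablePred E] :
    prob ν E + prob ν (fun ω => ¬ E ω) = ∑ ω, ν ω := by
  rw [prob, prob, ← sum_add_distrib]
  exact sum_congr rfl fun ω _ => by by_cases hE : E ω <;> simp [hE]

end Prob

section StarForest

variable {α : Type*} [DecidableEq α]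

def IsStarForest (P : Finset (α × α)) : Prop :=
  Set.InjOn Prod.fst (P : Set (α × α)) ∧ Disjoint (P.image Prod.fst) (P.image Prod.snd)

lemma exists_isStarForest_of_le_card_sub_card_image {β : Type*} [DecidableEq β] (h : α → β)
    (I : Finset α) {t : ℕ} (ht : t ≤ I.card - (I.image h).card) :
    ∃ P ⊆ I ×ˢ I, P.card = t ∧ IsStarForest P ∧ ∀ p ∈ P, h p.1 = h p.2 := by
  obtain ⟨R, hRI, hRinj, hRimage⟩ := exists_subset_injOn_image_eq_of_surjOn (I : Set α)
    (I.image h) (by rw [coe_image]; exact Set.surjOn_image h I)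
  have hRI : R ⊆ I := coe_subset.1 hRI
  have hRcard : R.card = (I.image h).card := by rw [← hRimage, card_image_of_injOn hRinj]
  obtain ⟨S, hS, hScard⟩ := exists_subset_card_eq (s := I \ R) (n := t)
    (by rw [card_sdiff_of_subset hRI]; omega)
  have hrep : ∀ a ∈ S, ∃ b ∈ R, h b = h a := fun a ha => by
    rw [← mem_image, hRimage]
    exact mem_image_of_mem h (mem_sdiff.1 (hS ha)).1
  choose! r hrR hrh using hrep
  have hfst : (S.image fun a => (a, r a)).image Prod.fst = S := by
    rw [image_image]; exact image_id'
  refine ⟨S.image fun a => (a, r a), ?_, ?_, ⟨?_, ?_⟩, ?_⟩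
  · simp only [subset_iff, mem_image, mem_product]
    rintro _ ⟨a, ha, rfl⟩
    exact ⟨(mem_sdiff.1 (hS ha)).1, hRI (hrR a ha)⟩
  · rw [card_image_of_injective _ fun a b hab => congrArg Prod.fst hab, hScard]
  · simp only [coe_image, Set.InjOn, Set.mem_image, mem_coe]
    rintro _ ⟨a, -, rfl⟩ _ ⟨b, -, rfl⟩ hab
    simp only at hab
    rw [hab]
  · rw [hfst, disjoint_right]
    simp only [image_image, mem_image, Function.comp]
    rintro _ ⟨a, ha, rfl⟩ hraS
    exact (mem_sdiff.1 (hS hraS)).2 (hrR a ha)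
  · simp only [mem_image]
    rintro _ ⟨a, ha, rfl⟩
    exact (hrh a ha).symm

end StarForest

section KWise

variable {α β : Type*} [Fintype α] [DecidableEq α] [Fintype β] [DecidableEq β]

def IsKWiseIndependent (ν : (α → β) → ℝ) (k : ℕ) : Prop :=
  ∀ T : Finset α, T.card ≤ k → ∀ j : α → β,
    prob ν (fun h => ∀ i ∈ T, h i = j i) = (1 / Fintype.card β : ℝ) ^ T.card

variable {ν : (α → β) → ℝ} {k : ℕ}

lemma IsKWiseIndependent.prob_le (hind : IsKWiseIndependent ν k) (hν : ∀ h, 0 ≤ ν h)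
    {T : Finset α} (hT : T.card ≤ k) (J : Finset (α → β)) {E : (α → β) → Prop}
    [DecidablePred E] (hE : ∀ h, E h → ∃ j ∈ J, ∀ i ∈ T, h i = j i) :
    prob ν E ≤ J.card * (1 / Fintype.card β : ℝ) ^ T.card :=
  calc prob ν E ≤ ∑ j ∈ J, prob ν (fun h => ∀ i ∈ T, h i = j i) := prob_le_sum_prob hν J _ hE
    _ = J.card * (1 / Fintype.card β : ℝ) ^ T.card := by
      rw [sum_congr rfl fun j _ => hind T hT j, sum_const, nsmul_eq_mul]

lemma IsKWiseIndependent.prob_forall_collide_le [Nonempty β] (hind : IsKWiseIndependent ν k)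
    (hν : ∀ h, 0 ≤ ν h) {P : Finset (α × α)} (hP : IsStarForest P) (hk : 2 * P.card ≤ k) :
    prob ν (fun h => ∀ p ∈ P, h p.1 = h p.2) ≤ (1 / Fintype.card β : ℝ) ^ P.card := by
  set A := P.image Prod.fst
  set B := P.image Prod.snd
  have hA : A.card = P.card := card_image_of_injOn hP.1
  have hB : B.card ≤ P.card := card_image_le
  have hT : (A ∪ B).card = P.card + B.card := by rw [card_union_of_disjoint hP.2, hA]
  let J : Finset (α → β) := univ.filter fun j =>
    (∀ p ∈ P, j p.1 = j p.2) ∧ ∀ i ∉ A ∪ B, j i = Classical.arbitrary β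
  have hcover : ∀ h : α → β, (∀ p ∈ P, h p.1 = h p.2) →
      ∃ j ∈ J, ∀ i ∈ A ∪ B, h i = j i := by
    intro h hh
    refine ⟨fun i => if i ∈ A ∪ B then h i else Classical.arbitrary β, ?_,
      fun i hi => by simp [hi]⟩
    refine mem_filter.2 ⟨mem_univ _, fun p hp => ?_, fun i hi => by simp [hi]⟩
    have h1 : p.1 ∈ A ∪ B := mem_union_left _ (mem_image_of_mem _ hp)
    have h2 : p.2 ∈ A ∪ B := mem_union_right _ (mem_image_of_mem _ hp)
    simp [h1, h2, hh p hp]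
  -- a member of `J` is determined by its values on the centres `B`
  have hJ : J.card ≤ Fintype.card β ^ B.card := by
    have hinj : Set.InjOn (fun (j : α → β) (b : B) => j b) J := by
      intro j hj j' hj' hjj'
      simp only [J, coe_filter, mem_univ, true_and, Set.mem_ofPred_eq] at hj hj'
      funext i
      by_cases hiB : i ∈ B
      · exact congrFun hjj' ⟨i, hiB⟩
      by_cases hiA : i ∈ A
      · obtain ⟨p, hp, rfl⟩ := mem_image.1 hiA
        rw [hj.1 p hp, hj'.1 p hp]
        exact congrFun hjj' ⟨p.2, mem_image_of_mem _ hp⟩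
      · have hiT : i ∉ A ∪ B := by simp [hiA, hiB]
        rw [hj.2 i hiT, hj'.2 i hiT]
    simpa using card_le_card_of_injOn _ (fun j _ => mem_univ _) hinj
  have hβ : (0 : ℝ) < Fintype.card β := by exact_mod_cast Fintype.card_pos
  calc prob ν (fun h => ∀ p ∈ P, h p.1 = h p.2)
      ≤ J.card * (1 / Fintype.card β : ℝ) ^ (A ∪ B).card :=
        hind.prob_le hν (by omega) J hcover
    _ ≤ (Fintype.card β : ℝ) ^ B.card * (1 / Fintype.card β : ℝ) ^ (P.card + B.card) := by
        rw [hT]; gcongr; exact_mod_cast hJ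
    _ = (1 / Fintype.card β : ℝ) ^ P.card := by
        rw [pow_add, mul_left_comm, ← mul_pow, mul_one_div_cancel hβ.ne', one_pow, mul_one]

lemma IsKWiseIndependent.prob_le_card_sub_card_image [Nonempty β]
    (hind : IsKWiseIndependent ν k) (hν : ∀ h, 0 ≤ ν h) (I : Finset α) {t : ℕ}
    (ht : 2 * t ≤ k) :
    prob ν (fun h => t ≤ I.card - (I.image h).card) ≤
      ((I.card : ℝ) ^ 2 / Fintype.card β) ^ t := by
  classical
  let X := ((I ×ˢ I).powersetCard t).filter IsStarForest
  have hX : (X.card : ℝ) ≤ ((I.card : ℝ) ^ 2) ^ t := by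
    have : X.card ≤ (I.card ^ 2) ^ t :=
      calc X.card ≤ (I.card ^ 2).choose t := by
            simpa [X, card_powersetCard, sq] using
              card_filter_le ((I ×ˢ I).powersetCard t) IsStarForest
        _ ≤ (I.card ^ 2) ^ t := Nat.choose_le_pow _ _
    exact_mod_cast this
  calc prob ν (fun h => t ≤ I.card - (I.image h).card)
      ≤ ∑ P ∈ X, prob ν (fun h => ∀ p ∈ P, h p.1 = h p.2) := by
        refine prob_le_sum_prob hν X _ fun h hh => ?_
        obtain ⟨P, hPI, hPcard, hP, hcol⟩ := exists_isStarForest_of_le_card_sub_card_image h I hh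
        exact ⟨P, mem_filter.2 ⟨mem_powersetCard.2 ⟨hPI, hPcard⟩, hP⟩, hcol⟩
    _ ≤ ∑ _P ∈ X, (1 / Fintype.card β : ℝ) ^ t := by
        refine sum_le_sum fun P hPX => ?_
        obtain ⟨hP, hPstar⟩ := mem_filter.1 hPX
        rw [← (mem_powersetCard.1 hP).2] at ht ⊢
        exact hind.prob_forall_collide_le hν hPstar ht
    _ = X.card * (1 / Fintype.card β : ℝ) ^ t := by rw [sum_const, nsmul_eq_mul]
    _ ≤ ((I.card : ℝ) ^ 2) ^ t * (1 / Fintype.card β : ℝ) ^ t := by gcongr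
    _ = ((I.card : ℝ) ^ 2 / Fintype.card β) ^ t := by rw [← mul_pow, mul_one_div]

end KWise

lemma pow_sq_div_le_of_pow_three_le {s m ε : ℝ} {t : ℕ} (hs : 0 ≤ s) (hm : 0 < m)
    (hsm : s ^ 3 ≤ m) (hε : 0 < ε) (ht : -3 * Real.log ε ≤ t * Real.log m) :
    (s ^ 2 / m) ^ t ≤ ε := by
  have hcube : (s ^ 2 / m) ^ 3 ≤ 1 / m := by
    rw [div_pow, ← pow_mul, div_le_div_iff₀ (by positivity) hm]
    calc s ^ (2 * 3) * m = (s ^ 3) ^ 2 * m := by ring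
      _ ≤ m ^ 2 * m := by gcongr
      _ = 1 * m ^ 3 := by ring
  have hlog : (1 / m) ^ t ≤ ε ^ 3 := by
    rw [← Real.log_le_log_iff (by positivity) (by positivity), Real.log_pow, Real.log_pow,
      one_div, Real.log_inv]
    push_cast
    linarith
  refine le_of_pow_le_pow_left₀ three_ne_zero hε.le ?_
  calc ((s ^ 2 / m) ^ t) ^ 3 = ((s ^ 2 / m) ^ 3) ^ t := by ring
    _ ≤ (1 / m) ^ t := pow_le_pow_left₀ (by positivity) hcube t
    _ ≤ ε ^ 3 := hlog

lemma neg_three_mul_log_le_of_le {m ε : ℝ} {k : ℕ} (hm : 1 < m) (hε : 0 < ε)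
    (hk : 6 * Real.log (m / ε) / Real.log m ≤ k) :
    -3 * Real.log ε ≤ (k / 2 : ℕ) * Real.log m := by
  have hL : 0 < Real.log m := Real.log_pos hm
  rw [div_le_iff₀ hL, Real.log_div (by positivity) hε.ne'] at hk
  have hhalf : (k : ℝ) ≤ 2 * (k / 2 : ℕ) + 1 := by exact_mod_cast (by omega : k ≤ 2 * (k / 2) + 1)
  nlinarith

theorem stmt5 : ∃ C : ℝ, 0 < C ∧ ∀ (n m : ℕ), 0 < n → 0 < m → ∀ (ε : ℝ), 0 < ε →
    ∀ k : ℕ, C * Real.log (m / ε) / Real.log m ≤ k →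
    ∀ (ν : (Fin n → Fin m) → ℝ), (∀ h, 0 ≤ ν h) → (∑ h, ν h = 1) →
    -- ν is a k-wise independent family of hash functions from [n] to [m]
    (∀ (T : Finset (Fin n)), T.card ≤ k → ∀ j : Fin n → Fin m,
      (∑ h, ν h * (if ∀ i ∈ T, h i = j i then (1:ℝ) else 0)) = (1 / (m:ℝ)) ^ T.card) →
    ∀ I : Finset (Fin n), I.card ^ 3 ≤ m →
    1 - ε ≤ ∑ h, ν h * (if I.card - (I.image h).card ≤ k then (1:ℝ) else 0) := by
  refine ⟨6, by norm_num, fun n m _ hm ε hε k hk ν hν₀ hν₁ hH I hIm => ?_⟩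
  have hind : IsKWiseIndependent ν k := fun T hT j => by
    rw [Fintype.card_fin, prob]
    -- the two `if`s differ only in their `Decidable` instances
    convert hH T hT j
  suffices hbad : prob ν (fun h => ¬ I.card - (I.image h).card ≤ k) ≤ ε by
    have hsplit := prob_add_prob_not (ν := ν) fun h => I.card - (I.image h).card ≤ k
    rw [hν₁] at hsplit
    change 1 - ε ≤ prob ν _
    linarith
  -- for `m = 1` the hypothesis on `k` is void (`Real.log 1 = 0`), but `I` has at most one point
  obtain rfl | hm₂ : m = 1 ∨ 2 ≤ m := by omega
  · have hI : (I : Set (Fin n)).Subsingleton := card_le_one_iff_subsingleton.1 (by simpa using hIm)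
    have hdef (h : Fin n → Fin 1) : I.card - (I.image h).card = 0 := by
      rw [card_image_of_injOn (hI.injOn h), Nat.sub_self]
    simp [prob, hdef, hε.le]
  have : Nonempty (Fin m) := ⟨⟨0, hm⟩⟩
  calc prob ν (fun h => ¬ I.card - (I.image h).card ≤ k)
      ≤ prob ν (fun h => k / 2 ≤ I.card - (I.image h).card) := prob_mono hν₀ fun h hh => by omega
    _ ≤ ((I.card : ℝ) ^ 2 / m) ^ (k / 2) := by
      simpa using hind.prob_le_card_sub_card_image hν₀ I (t := k / 2) (by omega)
    _ ≤ ε := pow_sq_div_le_of_pow_three_le (by positivity) (by positivity)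
      (by exact_mod_cast hIm) hε (neg_three_mul_log_le_of_le (by exact_mod_cast hm₂) hε hk)
end

section
/- Let C be a sufficiently large constant and ε > 0. Let H = {h : [n] → [m]} with m ≥ log(1/ε) be a (k, ℓ, ε/4)-spreading family with ℓ = C·log(1/ε). Let G be a generator over {−1,1}^n that fools signed-majority sums with error 1/4 (i.e., dtv(v·G, v·U) ≤ 1/4 for all v ∈ {0,±1}^n, U uniform). Define Y ∈ {−1,1}^n by Y_i = G(z_{h(i)})_i using m independent seeds z_1,…,z_m and h uniform in H. Then for all v ∈ {0,±1}^n with ‖v‖_0 ≥ k and all α with C√m/‖v‖_2 ≤ α ≤ 1/4: |E[exp(2πiα⟨v,Y⟩)] − E[exp(2πiα⟨v,X⟩)]| ≤ ε, where X is uniform on {−1,1}^n. -/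
open Finset

/-!
Conditioned on the hash function `h`, the `m` bins use independent seeds, so the character
`E exp(2πiα⟨v, Y⟩)` is the product over the bins `j` of `E_z exp(2πiα⟨v|_{h⁻¹(j)}, G(z)⟩)`.
Since `G` fools signed sums in total variation up to `1/4`, each factor is within `1/2` of its
uniform value `cos(2πα)^{K_j} ≤ exp(-8α²K_j)`, where `K_j` is the number of support coordinates
of `v` in bin `j`. With `C = 100` we have `α²K ≥ 10⁴ m` for `K = ‖v‖₀ = ‖v‖₂²`, so every bin
holding at least a `1/(2m)` fraction of the support contributes a factor of norm at most `3/5`.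
Every `h` has such a bin, and a spreading `h` has at least `50 log(1/ε)` of them, so its product
is at most `ε^20`. Averaging over `h`, and comparing with the uniform value
`cos(2πα)^K ≤ ε^20`, gives the bound.
-/

open Real

lemma cos_two_pi_mul_nonneg {α : ℝ} (h0 : 0 ≤ α) (h4 : α ≤ 1/4) : 0 ≤ cos (2 * π * α) :=
  cos_nonneg_of_mem_Icc ⟨by nlinarith [pi_pos], by nlinarith [pi_pos]⟩

lemma cos_two_pi_mul_le_exp {α : ℝ} (h0 : 0 ≤ α) (h4 : α ≤ 1/4) :
    cos (2 * π * α) ≤ exp (-(8 * α ^ 2)) := by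
  have hπ := pi_gt_three
  have hquad : cos (2 * π * α) ≤ 1 - 2 / π ^ 2 * (2 * π * α) ^ 2 :=
    cos_le_one_sub_mul_cos_sq (by rw [abs_of_nonneg (by positivity)]; nlinarith)
  have hcoeff : 2 / π ^ 2 * (2 * π * α) ^ 2 = 8 * α ^ 2 := by field_simp; ring
  linarith [add_one_le_exp (-(8 * α ^ 2))]

lemma cos_two_pi_mul_pow_le_exp {α : ℝ} (h0 : 0 ≤ α) (h4 : α ≤ 1/4) (N : ℕ) :
    cos (2 * π * α) ^ N ≤ exp (-(8 * α ^ 2 * N)) := by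
  calc cos (2 * π * α) ^ N ≤ exp (-(8 * α ^ 2)) ^ N :=
        pow_le_pow_left₀ (cos_two_pi_mul_nonneg h0 h4) (cos_two_pi_mul_le_exp h0 h4) N
    _ = exp (-(8 * α ^ 2 * N)) := by rw [← exp_nat_mul]; ring_nf

lemma cos_two_pi_mul_pow_le_one_tenth {α : ℝ} (h0 : 0 ≤ α) (h4 : α ≤ 1/4) {N : ℕ}
    (hN : 9 ≤ 8 * α ^ 2 * N) : cos (2 * π * α) ^ N ≤ 1/10 :=
  calc cos (2 * π * α) ^ N ≤ exp (-(8 * α ^ 2 * N)) := cos_two_pi_mul_pow_le_exp h0 h4 N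
    _ ≤ exp (-9) := exp_le_exp.mpr (by linarith)
    _ = (exp 9)⁻¹ := exp_neg 9
    _ ≤ 1/10 := by rw [one_div]; exact inv_anti₀ (by norm_num) (by linarith [add_one_le_exp 9])

lemma exp_neg_mul_log_one_div {ε : ℝ} (hε : 0 < ε) (N : ℕ) :
    exp (-(N * log (1 / ε))) = ε ^ N := by
  rw [one_div, log_inv, mul_neg, neg_neg, exp_nat_mul, exp_log hε]

lemma cos_two_pi_mul_pow_le_pow {α ε : ℝ} (h0 : 0 ≤ α) (h4 : α ≤ 1/4) (hε : 0 < ε) {N : ℕ}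
    (hN : 20 * log (1 / ε) ≤ 8 * α ^ 2 * N) : cos (2 * π * α) ^ N ≤ ε ^ 20 :=
  calc cos (2 * π * α) ^ N ≤ exp (-(8 * α ^ 2 * N)) := cos_two_pi_mul_pow_le_exp h0 h4 N
    _ ≤ exp (-((20 : ℕ) * log (1 / ε))) := exp_le_exp.mpr (by push_cast; linarith)
    _ = ε ^ 20 := exp_neg_mul_log_one_div hε 20

lemma three_fifths_pow_le {ε : ℝ} (hε : 0 < ε) {N : ℕ} (hN : 50 * log (1 / ε) ≤ N) :
    (3/5 : ℝ) ^ N ≤ ε ^ 20 :=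
  calc (3/5 : ℝ) ^ N ≤ exp (-(2/5)) ^ N :=
        pow_le_pow_left₀ (by norm_num) (by linarith [add_one_le_exp (-(2/5))]) N
    _ = exp (-((2/5) * N)) := by rw [← exp_nat_mul]; ring_nf
    _ ≤ exp (-((20 : ℕ) * log (1 / ε))) := exp_le_exp.mpr (by push_cast; linarith)
    _ = ε ^ 20 := exp_neg_mul_log_one_div hε 20

lemma sq_mul_le_sq_mul_of_mul_sqrt_div_sqrt_le {c x y α : ℝ} (hc : 0 ≤ c) (hx : 0 ≤ x)
    (hy : 0 < y) (h : c * √x / √y ≤ α) : 0 ≤ α ∧ c ^ 2 * x ≤ α ^ 2 * y := by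
  have h' : c * √x ≤ α * √y := (div_le_iff₀ (sqrt_pos.mpr hy)).mp h
  refine ⟨le_trans (by positivity) h, ?_⟩
  have hsq := pow_le_pow_left₀ (by positivity) h' 2
  rwa [mul_pow, mul_pow, sq_sqrt hx, sq_sqrt hy.le] at hsq

lemma add_le_of_le_pow_twenty {ε S c : ℝ} (hε : 0 < ε) (hS : S ≤ ε ^ 20 + 3/5 * (ε / 4))
    (hS' : S ≤ 3/5) (hc : c ≤ ε ^ 20) (hc' : c ≤ 1/10) : S + c ≤ ε := by
  rcases le_or_gt ε (3/4) with hsmall | hlarge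
  · have h20 : ε ^ 20 ≤ ε ^ 5 := pow_le_pow_of_le_one hε.le (by linarith) (by norm_num)
    have h4 : ε ^ 4 ≤ (3/4) ^ 4 := pow_le_pow_left₀ hε.le hsmall 4
    have h5 : ε ^ 5 ≤ ε * (3/4) ^ 4 := by
      rw [pow_succ']; exact mul_le_mul_of_nonneg_left h4 hε.le
    linarith
  · linarith

lemma Finset.sum_le_card_filter_le_mul_add {ι : Type*} (s : Finset ι) (a : ι → ℝ) {t b : ℝ}
    (ht : 0 ≤ t) (hb : ∀ j ∈ s, a j ≤ b) : ∑ j ∈ s, a j ≤ #{j ∈ s | t ≤ a j} * b + #s * t := by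
  rw [← sum_filter_add_sum_filter_not s (fun j => t ≤ a j)]
  have hheavy : ∑ j ∈ s with t ≤ a j, a j ≤ #{j ∈ s | t ≤ a j} * b := by
    simpa using sum_le_card_nsmul _ _ b fun j hj => hb j (mem_filter.mp hj).1
  have hlight : ∑ j ∈ s with ¬ t ≤ a j, a j ≤ #s * t := by
    calc ∑ j ∈ s with ¬ t ≤ a j, a j ≤ #{j ∈ s | ¬ t ≤ a j} * t := by
          simpa using sum_le_card_nsmul _ _ t fun j hj => (not_le.mp (mem_filter.mp hj).2).le
      _ ≤ #s * t := by gcongr; exact filter_subset _ _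
  linarith

lemma half_card_le_card_heavy_mul {ι κ : Type*} [Fintype κ] [DecidableEq κ] (I : Finset ι)
    (h : ι → κ) {b : ℝ} (hb : ∀ j, (#{i ∈ I | h i = j} : ℝ) ≤ b) :
    (#I : ℝ) / 2 ≤ #{j | (#I : ℝ) / (2 * Fintype.card κ) ≤ #{i ∈ I | h i = j}} * b := by
  have hcount := sum_le_card_filter_le_mul_add univ (fun j => (#{i ∈ I | h i = j} : ℝ))
    (t := #I / (2 * Fintype.card κ)) (by positivity) fun j _ => hb j
  have hfibers : ∑ j, (#{i ∈ I | h i = j} : ℝ) = #I := by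
    exact_mod_cast (card_eq_sum_card_fiberwise fun i _ => mem_univ (h i)).symm
  have hlight : (Fintype.card κ : ℝ) * (#I / (2 * Fintype.card κ)) ≤ #I / 2 := by
    rcases (Fintype.card κ).eq_zero_or_pos with h0 | hpos
    · simp only [h0, CharP.cast_eq_zero, zero_mul]; positivity
    · exact le_of_eq (by field_simp)
  rw [hfibers, card_univ] at hcount
  linarith

lemma norm_prod_le_pow_card {κ R : Type*} [Fintype κ] [NormedCommRing R] [NormOneClass R]
    {x : κ → R} (h1 : ∀ j, ‖x j‖ ≤ 1) {r : ℝ} (B : Finset κ) (hB : ∀ j ∈ B, ‖x j‖ ≤ r) :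
    ‖∏ j, x j‖ ≤ r ^ #B := by
  classical
  calc ‖∏ j, x j‖ ≤ ∏ j, ‖x j‖ := Finset.norm_prod_le _ _
    _ = (∏ j ∈ univ \ B, ‖x j‖) * ∏ j ∈ B, ‖x j‖ := (prod_sdiff (subset_univ B)).symm
    _ ≤ 1 * r ^ #B :=
        mul_le_mul (prod_le_one (fun _ _ => norm_nonneg _) fun j _ => h1 j)
          ((prod_le_prod (fun _ _ => norm_nonneg _) hB).trans_eq (prod_const r))
          (prod_nonneg fun _ _ => norm_nonneg _) zero_le_one
    _ = r ^ #B := one_mul _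

lemma sum_mul_le_add_mul_of_forall_le {ι : Type*} [Fintype ι] {ν B : ι → ℝ}
    (hν : ∀ i, 0 ≤ ν i) (hν1 : ∑ i, ν i = 1) (P : ι → Prop) [DecidablePred P] {a b η : ℝ}
    (ha : 0 ≤ a) (hb : 0 ≤ b) (hB : ∀ i, B i ≤ b) (hBP : ∀ i, P i → B i ≤ a)
    (hP : 1 - η ≤ ∑ i, ν i * if P i then 1 else 0) :
    ∑ i, ν i * B i ≤ a + b * η := by
  set W := ∑ i, ν i * if P i then (1:ℝ) else 0
  have hterm (i : ι) : ν i * B i ≤ a * (ν i * if P i then 1 else 0) +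
      b * (ν i - ν i * if P i then 1 else 0) := by
    by_cases hi : P i
    · simpa [hi, mul_comm] using mul_le_mul_of_nonneg_left (hBP i hi) (hν i)
    · simpa [hi, mul_comm] using mul_le_mul_of_nonneg_left (hB i) (hν i)
  have hW : W ≤ 1 := hν1 ▸ sum_le_sum fun i _ => by split_ifs <;> simp [hν i]
  calc ∑ i, ν i * B i
      ≤ ∑ i, (a * (ν i * if P i then 1 else 0) + b * (ν i - ν i * if P i then 1 else 0)) :=
        sum_le_sum fun i _ => hterm i
    _ = a * W + b * (1 - W) := by rw [sum_add_distrib, ← mul_sum, ← mul_sum, sum_sub_distrib, hν1]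
    _ ≤ a + b * η := by nlinarith

lemma norm_sum_ofReal_mul_sub_le {ι : Type*} [Fintype ι] {ν : ι → ℝ} (hν : ∀ i, 0 ≤ ν i)
    (P : ι → ℂ) (z : ℂ) : ‖∑ i, (ν i : ℂ) * P i - z‖ ≤ ∑ i, ν i * ‖P i‖ + ‖z‖ := by
  refine (norm_sub_le _ _).trans (add_le_add_left ((norm_sum_le _ _).trans_eq ?_) _)
  simp_rw [norm_mul, Complex.norm_real, norm_of_nonneg (hν _)]

lemma Finset.sum_abs_le_of_forall_abs_sum_mul_indicator_le {β : Type*} (S : Finset β)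
    (d : β → ℝ) {δ : ℝ}
    (h : ∀ A : Set β, |∑ t ∈ S, d t * A.indicator (fun _ => (1:ℝ)) t| ≤ δ) :
    ∑ t ∈ S, |d t| ≤ 2 * δ := by
  set A : Set β := {t | 0 ≤ d t}
  have hsplit : ∑ t ∈ S, |d t| = ∑ t ∈ S, d t * A.indicator (fun _ => (1:ℝ)) t -
      ∑ t ∈ S, d t * Aᶜ.indicator (fun _ => (1:ℝ)) t := by
    rw [← sum_sub_distrib]
    refine sum_congr rfl fun t _ => ?_
    by_cases ht : 0 ≤ d t
    · simp [A, ht, abs_of_nonneg ht]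
    · simp [A, ht, abs_of_neg (not_le.mp ht)]
  have hA := abs_le.mp (h A)
  have hAc := abs_le.mp (h Aᶜ)
  linarith

lemma sum_smul_comp_eq_sum_fiber {Ω β M : Type*} [Fintype Ω] [DecidableEq β] [AddCommGroup M]
    [Module ℝ M] (p : Ω → ℝ) (s : Ω → β) (S : Finset β) (hS : ∀ ω, s ω ∈ S) (f : β → M) :
    ∑ ω, p ω • f (s ω) = ∑ t ∈ S, (∑ ω with s ω = t, p ω) • f t := by
  rw [← sum_fiberwise_of_maps_to (fun ω _ => hS ω)]
  refine sum_congr rfl fun t _ => ?_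
  rw [sum_smul]
  exact sum_congr rfl fun ω hω => by rw [(mem_filter.mp hω).2]

theorem norm_sum_sub_sum_le_of_forall_abs_indicator_le {Ω Ω' β : Type*} [Fintype Ω]
    [Fintype Ω'] (p : Ω → ℝ) (p' : Ω' → ℝ) (s : Ω → β) (s' : Ω' → β) {δ : ℝ}
    (h : ∀ A : Set β, |∑ ω, p ω * A.indicator (fun _ => (1:ℝ)) (s ω) -
      ∑ x, p' x * A.indicator (fun _ => (1:ℝ)) (s' x)| ≤ δ)
    (F : β → ℂ) (hF : ∀ t, ‖F t‖ ≤ 1) :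
    ‖∑ ω, (p ω : ℂ) * F (s ω) - ∑ x, (p' x : ℂ) * F (s' x)‖ ≤ 2 * δ := by
  classical
  set S := univ.image s ∪ univ.image s'
  have hs ω : s ω ∈ S := mem_union_left _ (mem_image_of_mem s (mem_univ ω))
  have hs' x : s' x ∈ S := mem_union_right _ (mem_image_of_mem s' (mem_univ x))
  set d : β → ℝ := fun t => ∑ ω with s ω = t, p ω - ∑ x with s' x = t, p' x
  have hd {M : Type} [AddCommGroup M] [Module ℝ M] (f : β → M) :
      ∑ ω, p ω • f (s ω) - ∑ x, p' x • f (s' x) = ∑ t ∈ S, d t • f t := by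
    simp_rw [sum_smul_comp_eq_sum_fiber p s S hs, sum_smul_comp_eq_sum_fiber p' s' S hs',
      d, sub_smul, sum_sub_distrib]
  have hL1 : ∑ t ∈ S, |d t| ≤ 2 * δ := by
    refine S.sum_abs_le_of_forall_abs_sum_mul_indicator_le d fun A => ?_
    have hA := hd (A.indicator fun _ => (1:ℝ))
    simp only [smul_eq_mul] at hA
    exact hA ▸ h A
  simp_rw [← Complex.real_smul, hd]
  calc ‖∑ t ∈ S, d t • F t‖ ≤ ∑ t ∈ S, ‖d t • F t‖ := norm_sum_le _ _
    _ ≤ ∑ t ∈ S, |d t| := sum_le_sum fun t _ => by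
        rw [norm_smul, Real.norm_eq_abs]
        exact mul_le_of_le_one_right (abs_nonneg _) (hF t)
    _ ≤ 2 * δ := hL1

theorem Fintype.sum_prod_mul_prod_comp_eq_prod_sum {ι κ Ω R : Type*} [Fintype ι] [Fintype κ]
    [DecidableEq κ] [Fintype Ω] [CommSemiring R] (q : Ω → R) (f : ι → Ω → R) (h : ι → κ) :
    ∑ z : κ → Ω, (∏ j, q (z j)) * ∏ i, f i (z (h i)) =
      ∏ j, ∑ ω, q ω * ∏ i with h i = j, f i ω := by
  have hfiber (z : κ → Ω) : ∏ i, f i (z (h i)) = ∏ j, ∏ i with h i = j, f i (z j) := by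
    rw [← Finset.prod_fiberwise univ h]
    exact Finset.prod_congr rfl fun j _ =>
      Finset.prod_congr rfl fun i hi => by rw [(mem_filter.mp hi).2]
  simp_rw [hfiber, ← prod_mul_distrib]
  exact (Fintype.prod_sum fun j ω => q ω * ∏ i with h i = j, f i ω).symm

lemma exp_two_pi_I_mul_sum {ι : Type*} (s : Finset ι) (a : ι → ℝ) :
    Complex.exp (2 * π * Complex.I * ((∑ i ∈ s, a i : ℝ) : ℂ)) =
      ∏ i ∈ s, Complex.exp (2 * π * Complex.I * (a i : ℂ)) := by
  push_cast
  rw [Finset.mul_sum, Complex.exp_sum]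

lemma norm_exp_two_pi_I_mul (t : ℝ) : ‖Complex.exp (2 * π * Complex.I * (t : ℂ))‖ = 1 := by
  rw [← Complex.norm_exp_ofReal_mul_I (2 * π * t)]
  push_cast
  ring_nf

lemma sum_bool_exp_two_pi_I_mul_pm (a : ℝ) :
    ∑ b : Bool, Complex.exp (2 * π * Complex.I * ((a * pm b : ℝ) : ℂ)) =
      2 * (cos (2 * π * a) : ℂ) := by
  rw [Fintype.sum_bool, Complex.ofReal_cos, Complex.cos]
  simp only [pm, if_true, Bool.false_eq_true, if_false]
  push_cast
  ring_nf

lemma sum_cube_exp_two_pi_I {n : ℕ} (a : Fin n → ℝ) :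
    ∑ x : Fin n → Bool, Complex.exp (2 * π * Complex.I * ((∑ i, a i * pm (x i) : ℝ) : ℂ)) =
      2 ^ n * ∏ i, (cos (2 * π * a i) : ℂ) := by
  simp_rw [exp_two_pi_I_mul_sum]
  rw [← Fintype.prod_sum fun i b => Complex.exp (2 * π * Complex.I * ((a i * pm b : ℝ) : ℂ))]
  simp_rw [sum_bool_exp_two_pi_I_mul_pm, prod_mul_distrib, prod_const, card_univ,
    Fintype.card_fin]

def IsSignVector {ι : Type*} (v : ι → ℝ) : Prop := ∀ i, v i = 0 ∨ v i = 1 ∨ v i = -1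

lemma IsSignVector.indicator {ι : Type*} {v : ι → ℝ} (hv : IsSignVector v) (s : Set ι) :
    IsSignVector (s.indicator v) := fun i => by
  by_cases hi : i ∈ s <;> simp [hi, hv i]

lemma IsSignVector.sum_sq {ι : Type*} [Fintype ι] {v : ι → ℝ} (hv : IsSignVector v) :
    ∑ i, v i ^ 2 = #{i | v i ≠ 0} := by
  rw [Finset.natCast_card_filter, ← sum_congr rfl fun i _ => ?_]
  rcases hv i with h | h | h <;> simp [h]

lemma IsSignVector.cos_two_pi_mul {ι : Type*} {w : ι → ℝ} (hw : IsSignVector w) (α : ℝ)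
    (i : ι) : cos (2 * π * (α * w i)) = if w i ≠ 0 then cos (2 * π * α) else 1 := by
  rcases hw i with h | h | h <;> simp [h]

theorem uniform_average_exp_two_pi_I {n : ℕ} {w : Fin n → ℝ} (hw : IsSignVector w) (α : ℝ) :
    (((2:ℝ) ^ n : ℝ) : ℂ)⁻¹ * ∑ x : Fin n → Bool,
        Complex.exp (2 * π * Complex.I * ((α * ∑ i, w i * pm (x i) : ℝ) : ℂ)) =
      (cos (2 * π * α) : ℂ) ^ #{i | w i ≠ 0} := by
  have hsum (x : Fin n → Bool) : α * ∑ i, w i * pm (x i) = ∑ i, α * w i * pm (x i) := by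
    simp_rw [mul_sum, mul_assoc]
  simp_rw [hsum, sum_cube_exp_two_pi_I, hw.cos_two_pi_mul]
  rw [← Complex.ofReal_prod, ← prod_filter, prod_const]
  push_cast
  field_simp

lemma card_indicator_preimage_ne_zero {ι κ : Type*} [Fintype ι] [DecidableEq κ] (v : ι → ℝ)
    (h : ι → κ) (j : κ) :
    #{i | (h ⁻¹' {j}).indicator v i ≠ 0} = #{i ∈ {i | v i ≠ 0} | h i = j} := by
  congr 1
  ext i
  by_cases hi : h i = j <;> simp [hi]

section Generator

variable {n m : ℕ} {Ω : Type*} [Fintype Ω]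

def FoolsSignedSums (q : Ω → ℝ) (G : Ω → Fin n → Bool) (δ : ℝ) : Prop :=
  ∀ v : Fin n → ℝ, IsSignVector v → ∀ A : Set ℝ,
    |(∑ ω, q ω * A.indicator (fun _ => (1:ℝ)) (∑ i, v i * pm (G ω i))) -
      ((2:ℝ) ^ n)⁻¹ * ∑ x : Fin n → Bool, A.indicator (fun _ => (1:ℝ)) (∑ i, v i * pm (x i))| ≤ δ

noncomputable def generatorChar (q : Ω → ℝ) (G : Ω → Fin n → Bool) (α : ℝ) (w : Fin n → ℝ) :
    ℂ :=
  ∑ ω, (q ω : ℂ) * Complex.exp (2 * π * Complex.I * ((α * ∑ i, w i * pm (G ω i) : ℝ) : ℂ))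

/-- The value of `E exp(2πiα⟨v, Y⟩)` conditioned on the hash function `h`. -/
noncomputable def hashedChar (q : Ω → ℝ) (G : Ω → Fin n → Bool) (α : ℝ) (v : Fin n → ℝ)
    (h : Fin n → Fin m) : ℂ :=
  ∏ j, generatorChar q G α ((h ⁻¹' {j}).indicator v)

theorem sum_seeds_eq_hashedChar (q : Ω → ℝ) (G : Ω → Fin n → Bool) (α : ℝ)
    (v : Fin n → ℝ) (h : Fin n → Fin m) :
    ∑ z : Fin m → Ω, ((∏ j, q (z j) : ℝ) : ℂ) *
        Complex.exp (2 * π * Complex.I * ((α * ∑ i, v i * pm (G (z (h i)) i) : ℝ) : ℂ)) =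
      hashedChar q G α v h := by
  have hsum (w : Fin n → ℝ) (x : Fin n → Bool) :
      α * ∑ i, w i * pm (x i) = ∑ i, α * w i * pm (x i) := by
    simp_rw [mul_sum, mul_assoc]
  have hbin (j : Fin m) (ω : Ω) :
      Complex.exp (2 * π * Complex.I *
          ((α * ∑ i, (h ⁻¹' {j}).indicator v i * pm (G ω i) : ℝ) : ℂ)) =
        ∏ i with h i = j, Complex.exp (2 * π * Complex.I * ((α * v i * pm (G ω i) : ℝ) : ℂ)) := by
    have hrestrict : ∑ i, α * (h ⁻¹' {j}).indicator v i * pm (G ω i) =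
        ∑ i with h i = j, α * v i * pm (G ω i) := by
      rw [sum_filter]
      refine sum_congr rfl fun i _ => ?_
      by_cases hi : h i = j <;> simp [hi]
    rw [hsum, hrestrict, exp_two_pi_I_mul_sum]
  simp_rw [hashedChar, generatorChar, hbin]
  rw [← Fintype.sum_prod_mul_prod_comp_eq_prod_sum _ _ h]
  refine sum_congr rfl fun z _ => ?_
  rw [hsum, exp_two_pi_I_mul_sum, Complex.ofReal_prod]

theorem sum_hash_seeds_eq_sum_hashedChar (ν : (Fin n → Fin m) → ℝ) (q : Ω → ℝ)
    (G : Ω → Fin n → Bool) (α : ℝ) (v : Fin n → ℝ) :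
    ∑ h, ∑ z : Fin m → Ω, ((ν h * ∏ j, q (z j) : ℝ) : ℂ) *
        Complex.exp (2 * π * Complex.I * ((α * ∑ i, v i * pm (G (z (h i)) i) : ℝ) : ℂ)) =
      ∑ h, (ν h : ℂ) * hashedChar q G α v h := by
  refine sum_congr rfl fun h _ => ?_
  rw [← sum_seeds_eq_hashedChar, mul_sum]
  refine sum_congr rfl fun z _ => ?_
  push_cast
  ring

variable {q : Ω → ℝ}

lemma hashedChar_zero (hq : ∑ ω, q ω = 1) (G : Ω → Fin n → Bool) (α : ℝ) (h : Fin n → Fin m) :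
    hashedChar q G α 0 h = 1 := by
  simp [hashedChar, generatorChar, ← Complex.ofReal_sum, hq]

lemma norm_generatorChar_le_one (hq₀ : ∀ ω, 0 ≤ q ω) (hq : ∑ ω, q ω = 1)
    (G : Ω → Fin n → Bool) (α : ℝ) (w : Fin n → ℝ) : ‖generatorChar q G α w‖ ≤ 1 := by
  calc ‖generatorChar q G α w‖ ≤ ∑ ω, ‖(q ω : ℂ) *
        Complex.exp (2 * π * Complex.I * ((α * ∑ i, w i * pm (G ω i) : ℝ) : ℂ))‖ :=
        norm_sum_le _ _
    _ = 1 := by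
        simp_rw [norm_mul, norm_exp_two_pi_I_mul, mul_one, Complex.norm_real,
          norm_of_nonneg (hq₀ _), hq]

theorem norm_generatorChar_le {G : Ω → Fin n → Bool} (hG : FoolsSignedSums q G (1/4))
    {w : Fin n → ℝ} (hw : IsSignVector w) {α : ℝ} (hcos : 0 ≤ cos (2 * π * α)) :
    ‖generatorChar q G α w‖ ≤ cos (2 * π * α) ^ #{i | w i ≠ 0} + 1/2 := by
  have hdtv := norm_sum_sub_sum_le_of_forall_abs_indicator_le q
    (fun _ : Fin n → Bool => ((2:ℝ) ^ n)⁻¹) (fun ω => ∑ i, w i * pm (G ω i))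
    (fun x => ∑ i, w i * pm (x i)) (by simpa only [mul_sum] using hG w hw)
    (fun t => Complex.exp (2 * π * Complex.I * ((α * t : ℝ) : ℂ)))
    (fun t => (norm_exp_two_pi_I_mul _).le)
  have hX := uniform_average_exp_two_pi_I hw α
  rw [mul_sum] at hX
  push_cast at hdtv hX
  rw [hX] at hdtv
  have hdiff : ‖generatorChar q G α w - (cos (2 * π * α) : ℂ) ^ #{i | w i ≠ 0}‖ ≤ 1/2 := by
    unfold generatorChar
    push_cast
    linarith
  calc ‖generatorChar q G α w‖
      ≤ ‖generatorChar q G α w - (cos (2 * π * α) : ℂ) ^ #{i | w i ≠ 0}‖ +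
        ‖(cos (2 * π * α) : ℂ) ^ #{i | w i ≠ 0}‖ := norm_le_norm_sub_add _ _
    _ ≤ 1/2 + cos (2 * π * α) ^ #{i | w i ≠ 0} := by
        rw [norm_pow, Complex.norm_real, norm_of_nonneg hcos]
        exact add_le_add_left hdiff _
    _ = _ := add_comm _ _

theorem norm_generatorChar_le_three_fifths {G : Ω → Fin n → Bool}
    (hG : FoolsSignedSums q G (1/4)) {w : Fin n → ℝ} (hw : IsSignVector w) {α : ℝ}
    (hα0 : 0 ≤ α) (hα4 : α ≤ 1/4) (hload : 9 ≤ 8 * α ^ 2 * #{i | w i ≠ 0}) :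
    ‖generatorChar q G α w‖ ≤ 3/5 := by
  linarith [norm_generatorChar_le hG hw (cos_two_pi_mul_nonneg hα0 hα4),
    cos_two_pi_mul_pow_le_one_tenth hα0 hα4 hload]

variable {G : Ω → Fin n → Bool} {v : Fin n → ℝ} {α : ℝ}

theorem norm_hashedChar_le_pow_card (hq₀ : ∀ ω, 0 ≤ q ω) (hq : ∑ ω, q ω = 1)
    (hG : FoolsSignedSums q G (1/4)) (hv : IsSignVector v) (hα0 : 0 ≤ α) (hα4 : α ≤ 1/4)
    (hαK : 10000 * m ≤ α ^ 2 * #{i | v i ≠ 0}) (h : Fin n → Fin m) :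
    ‖hashedChar q G α v h‖ ≤ (3/5) ^
      #{j | (#{i | v i ≠ 0} : ℝ) / (2 * m) ≤ #{i ∈ {i | v i ≠ 0} | h i = j}} := by
  refine norm_prod_le_pow_card (fun j => norm_generatorChar_le_one hq₀ hq G α _) _
    fun j hj => norm_generatorChar_le_three_fifths hG (hv.indicator _) hα0 hα4 ?_
  have hm : (0:ℝ) < m := by exact_mod_cast j.pos
  rw [card_indicator_preimage_ne_zero]
  rw [mem_filter, div_le_iff₀ (by positivity)] at hj
  nlinarith [hj.2, sq_nonneg α]

theorem norm_hashedChar_le_three_fifths (hq₀ : ∀ ω, 0 ≤ q ω) (hq : ∑ ω, q ω = 1)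
    (hG : FoolsSignedSums q G (1/4)) (hv : IsSignVector v) (hα0 : 0 ≤ α) (hα4 : α ≤ 1/4)
    (hαK : 10000 * m ≤ α ^ 2 * #{i | v i ≠ 0}) (hK : 0 < #{i | v i ≠ 0}) (h : Fin n → Fin m) :
    ‖hashedChar q G α v h‖ ≤ 3/5 := by
  refine (norm_hashedChar_le_pow_card hq₀ hq hG hv hα0 hα4 hαK h).trans
    (pow_le_of_le_one (by norm_num) (by norm_num) fun hnone => ?_)
  have hheavy := half_card_le_card_heavy_mul {i | v i ≠ 0} h (b := #{i | v i ≠ 0})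
    fun j => by exact_mod_cast card_le_card (filter_subset _ _)
  rw [Fintype.card_fin, hnone, Nat.cast_zero, zero_mul] at hheavy
  have hKpos : (0:ℝ) < #{i | v i ≠ 0} := by exact_mod_cast hK
  linarith

theorem norm_hashedChar_le_of_spread (hq₀ : ∀ ω, 0 ≤ q ω) (hq : ∑ ω, q ω = 1)
    (hG : FoolsSignedSums q G (1/4)) (hv : IsSignVector v) (hα0 : 0 ≤ α) (hα4 : α ≤ 1/4)
    (hαK : 10000 * m ≤ α ^ 2 * #{i | v i ≠ 0}) (hK : 0 < #{i | v i ≠ 0}) {ε : ℝ} (hε : 0 < ε)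
    {h : Fin n → Fin m}
    (hspread : ∀ j, (#{i ∈ {i | v i ≠ 0} | h i = j} : ℝ) ≤
      #{i | v i ≠ 0} / (100 * log (1 / ε))) :
    ‖hashedChar q G α v h‖ ≤ ε ^ 20 := by
  refine (norm_hashedChar_le_pow_card hq₀ hq hG hv hα0 hα4 hαK h).trans
    (three_fifths_pow_le hε ?_)
  have hheavy := half_card_le_card_heavy_mul {i | v i ≠ 0} h hspread
  rw [Fintype.card_fin] at hheavy
  have hKpos : (0:ℝ) < #{i | v i ≠ 0} := by exact_mod_cast hK
  rcases le_or_gt (log (1 / ε)) 0 with hL | hL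
  · exact (by linarith : 50 * log (1 / ε) ≤ 0).trans (Nat.cast_nonneg _)
  · rw [mul_div_assoc', le_div_iff₀ (by positivity)] at hheavy
    nlinarith

end Generator

theorem stmt12 : ∃ C : ℝ, 0 < C ∧
    ∀ (n m : ℕ), 0 < n → 0 < m → ∀ (ε : ℝ), 0 < ε → Real.log (1 / ε) ≤ m →
    ∀ (k : ℕ),
    ∀ (ν : (Fin n → Fin m) → ℝ), (∀ h, 0 ≤ ν h) → (∑ h, ν h = 1) →
    -- ν is a (k, C·log(1/ε), ε/4)-spreading family of hash functions
    (∀ I : Finset (Fin n), k ≤ I.card →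
      1 - ε / 4 ≤ ∑ h, ν h * (if ∀ j : Fin m,
        ((I.filter fun i => h i = j).card : ℝ) ≤ (I.card : ℝ) / (C * Real.log (1 / ε))
        then (1:ℝ) else 0)) →
    ∀ (Ω : Type) [Fintype Ω], ∀ (q : Ω → ℝ), (∀ ω, 0 ≤ q ω) → (∑ ω, q ω = 1) →
    ∀ (G : Ω → Fin n → Bool),
    -- G fools signed-majority sums in statistical distance with error 1/4
    (∀ v : Fin n → ℝ, (∀ i, v i = 0 ∨ v i = 1 ∨ v i = -1) → ∀ A : Set ℝ,
      |(∑ ω, q ω * A.indicator (fun _ => (1:ℝ)) (∑ i, v i * pm (G ω i))) -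
        ((2:ℝ) ^ n)⁻¹ * ∑ x : Fin n → Bool,
          A.indicator (fun _ => (1:ℝ)) (∑ i, v i * pm (x i))| ≤ 1/4) →
    ∀ v : Fin n → ℝ, (∀ i, v i = 0 ∨ v i = 1 ∨ v i = -1) →
    k ≤ (univ.filter fun i => v i ≠ 0).card →
    ∀ α : ℝ, C * Real.sqrt m / Real.sqrt (∑ i, v i ^ 2) ≤ α → α ≤ 1/4 →
    -- Y_i = G(z_{h(i)})_i fools the Fourier test φ_{v,α}
    ‖(∑ h, ∑ z : Fin m → Ω, ((ν h * ∏ j, q (z j) : ℝ) : ℂ) *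
        Complex.exp (2 * Real.pi * Complex.I *
          (α * ∑ i, v i * pm (G (z (h i)) i) : ℝ))) -
      (((2:ℝ) ^ n : ℝ) : ℂ)⁻¹ * ∑ x : Fin n → Bool,
        Complex.exp (2 * Real.pi * Complex.I * (α * ∑ i, v i * pm (x i) : ℝ))‖ ≤ ε := by
  refine ⟨100, by norm_num, ?_⟩
  intro n m _ hm ε hε hmlog k ν hν hνsum hspread Ω _ q hq hqsum G hG v hv hkv α hα1 hα2
  rw [sum_hash_seeds_eq_sum_hashedChar, uniform_average_exp_two_pi_I hv]
  rcases (#{i | v i ≠ 0}).eq_zero_or_pos with hK | hK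
  · have hv0 : v = 0 := funext fun i => by
      simpa using filter_eq_empty_iff.mp (card_eq_zero.mp hK) (mem_univ i)
    simp [hv0, hashedChar_zero hqsum, ← Complex.ofReal_sum, hνsum, hε.le]
  rw [IsSignVector.sum_sq hv] at hα1
  obtain ⟨hα0, hαK⟩ := sq_mul_le_sq_mul_of_mul_sqrt_div_sqrt_le (by norm_num) (Nat.cast_nonneg m)
    (Nat.cast_pos.mpr hK) hα1
  rw [show (100:ℝ) ^ 2 = 10000 by norm_num] at hαK
  have hm1 : (1:ℝ) ≤ m := by exact_mod_cast hm
  have hP := norm_hashedChar_le_three_fifths hq hqsum hG hv hα0 hα2 hαK hK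
  have hcos := cos_two_pi_mul_nonneg hα0 hα2
  refine (norm_sum_ofReal_mul_sub_le hν _ _).trans ?_
  rw [norm_pow, Complex.norm_real, norm_of_nonneg hcos]
  refine add_le_of_le_pow_twenty hε ?_ ?_
    (cos_two_pi_mul_pow_le_pow hα0 hα2 hε (by linarith))
    (cos_two_pi_mul_pow_le_one_tenth hα0 hα2 (by linarith))
  · exact sum_mul_le_add_mul_of_forall_le hν hνsum _ (by positivity) (by norm_num) hP
      (fun h hh => norm_hashedChar_le_of_spread hq hqsum hG hv hα0 hα2 hαK hK hε hh)
      (hspread _ hkv)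
  · exact (sum_le_sum fun h _ => mul_le_mul_of_nonneg_left (hP h) (hν h)).trans_eq
      (by rw [← sum_mul, hνsum, one_mul])
end
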